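/- arXiv:2111.01438 — 10 statements merged into one kernel-verified Lean document; each statement's English description precedes it below -/
import Mathlib

section
/- Let H be a linear space of dimension ≥ 3 over a division ring K and let ⊥ be an orthogeometry relation on H. Then for every finite-dimensional subspace U of H, any finite set of mutually orthogonal nonzero vectors contained in U can be extended to an orthogonal basis of U, i.e., to a finite set of pairwise orthogonal nonzero vectors which is linearly independent and spans U. -/
open Submodule

section Aux

variable {K : Type*} [DivisionRing K] {H : Type*} [AddCommGroup H] [Module K H]
    (perp : H → H → Prop)
    (hsymm : ∀ u v : H, perp u v → perp v u)
    (hirr : ∀ u : H, u ≠ 0 → ¬ perp u u)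
    (og1 : ∀ w u v : H, perp w u → perp w v →
      ∀ x ∈ Submodule.span K ({u, v} : Set H), x ≠ 0 → perp w x)

include og1 in
/-- If `w` is perpendicular to every element of a finite set, it is perpendicular to
every nonzero element of the span. -/
lemma perp_span_aux (w : H) : ∀ (T : Finset H), (∀ u ∈ T, perp w u) →
    ∀ x ∈ span K (T : Set H), x ≠ 0 → perp w x := by
  classical
  intro T
  induction T using Finset.induction_on with
  | empty =>
    intro _ x hx hx0
    simp only [Finset.coe_empty, span_empty, mem_bot] at hx
    exact absurd hx hx0
  | @insert a T' ha ih =>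
    intro hw x hx hx0
    rw [Finset.coe_insert, mem_span_insert] at hx
    obtain ⟨c, y, hy, rfl⟩ := hx
    have hwa : perp w a := hw a (Finset.mem_insert_self a T')
    by_cases hy0 : y = 0
    · subst hy0
      refine og1 w a a hwa hwa _ ?_ hx0
      have : ({a, a} : Set H) = {a} := by simp
      rw [this]
      simpa using smul_mem (span K ({a} : Set H)) c (mem_span_singleton_self a)
    · have hwy : perp w y := ih (fun u hu => hw u (Finset.mem_insert_of_mem hu)) y hy hy0
      refine og1 w a y hwa hwy _ ?_ hx0
      rw [mem_span_pair]
      exact ⟨c, 1, by simp⟩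

include hsymm hirr og1 in
/-- A pairwise perpendicular finite set of nonzero vectors is linearly independent. -/
lemma perp_linearIndependent : ∀ (T : Finset H), (∀ u ∈ T, u ≠ 0) →
    (∀ u ∈ T, ∀ v ∈ T, u ≠ v → perp u v) →
    LinearIndependent K (fun x : (T : Set H) => (x : H)) := by
  classical
  intro T
  induction T using Finset.induction_on with
  | empty =>
    intro _ _
    rw [show ((∅ : Finset H) : Set H) = (∅ : Set H) from Finset.coe_empty]
    exact linearIndependent_empty K H
  | @insert a T' ha ih =>
    intro h0 hp
    have hT' : LinearIndependent K (fun x : (T' : Set H) => (x : H)) :=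
      ih (fun u hu => h0 u (Finset.mem_insert_of_mem hu))
        (fun u hu v hv huv => hp u (Finset.mem_insert_of_mem hu) v (Finset.mem_insert_of_mem hv) huv)
    have ha0 : a ≠ 0 := h0 a (Finset.mem_insert_self a T')
    have hnotmem : a ∉ span K (T' : Set H) := by
      intro hmem
      have hperpall : ∀ u ∈ T', perp a u := fun u hu =>
        hp a (Finset.mem_insert_self a T') u (Finset.mem_insert_of_mem hu)
          (fun h => ha (h ▸ hu))
      exact hirr a ha0 (perp_span_aux perp og1 a T' hperpall a hmem ha0)
    rw [Finset.coe_insert]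
    exact LinearIndepOn.id_insert hT' hnotmem

include hsymm hirr og1 in
/-- Gram–Schmidt step: given a pairwise perpendicular set of nonzero vectors `t` and a vector
`v` not in its span, there is a nonzero `w` perpendicular to all of `t` such that
inserting `w` spans the same as inserting `v`. -/
lemma gram_schmidt
    (og2 : ∀ u v : H, LinearIndependent K ![u, v] →
      ∃ w ∈ Submodule.span K ({u, v} : Set H), w ≠ 0 ∧ perp w u) :
    ∀ (t : Finset H), (∀ u ∈ t, u ≠ 0) → (∀ u ∈ t, ∀ v ∈ t, u ≠ v → perp u v) →
    ∀ v : H, v ∉ span K (t : Set H) →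
    ∃ w : H, w ≠ 0 ∧ (∀ u ∈ t, perp w u) ∧
      span K (insert w (t : Set H)) = span K (insert v (t : Set H)) := by
  classical
  intro t
  induction t using Finset.induction_on with
  | empty =>
    intro _ _ v hv
    refine ⟨v, ?_, by simp, rfl⟩
    rintro rfl
    exact hv (zero_mem _)
  | @insert a t' hat' ih =>
    intro h0 hp v hv
    have h0' : ∀ u ∈ t', u ≠ 0 := fun u hu => h0 u (Finset.mem_insert_of_mem hu)
    have hp' : ∀ u ∈ t', ∀ v ∈ t', u ≠ v → perp u v := fun u hu v hv huv =>
      hp u (Finset.mem_insert_of_mem hu) v (Finset.mem_insert_of_mem hv) huv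
    have ha0 : a ≠ 0 := h0 a (Finset.mem_insert_self a t')
    have hvt' : v ∉ span K (t' : Set H) := fun h =>
      hv (span_mono (by rw [Finset.coe_insert]; exact Set.subset_insert _ _) h)
    obtain ⟨w', hw'0, hw'perp, hw'span⟩ := ih h0' hp' v hvt'
    -- w' is not in the span of insert a t'
    have hw'notmem : w' ∉ span K ((insert a t' : Finset H) : Set H) := by
      intro hmem
      apply hv
      have hsub : span K (insert w' (t' : Set H)) ≤ span K ((insert a t' : Finset H) : Set H) := by
        rw [span_le, Set.insert_subset_iff]
        refine ⟨hmem, ?_⟩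
        refine Set.Subset.trans ?_ (subset_span)
        rw [Finset.coe_insert]
        exact Set.subset_insert _ _
      have : v ∈ span K (insert w' (t' : Set H)) := by
        rw [hw'span]; exact subset_span (Set.mem_insert _ _)
      exact hsub this
    have hamem : a ∈ span K ((insert a t' : Finset H) : Set H) := by
      exact subset_span (by rw [Finset.coe_insert]; exact Set.mem_insert _ _)
    -- ![a, w'] is linearly independent
    have hli : LinearIndependent K ![a, w'] := by
      rw [linearIndependent_fin2]
      refine ⟨hw'0, ?_⟩
      intro c hc
      simp only [Matrix.cons_val_one, Matrix.head_cons, Matrix.cons_val_zero] at hc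
      have hc0 : c ≠ 0 := by rintro rfl; rw [zero_smul] at hc; exact ha0 hc.symm
      apply hw'notmem
      have : w' = c⁻¹ • a := by rw [← hc, smul_smul, inv_mul_cancel₀ hc0, one_smul]
      rw [this]
      exact smul_mem _ _ hamem
    obtain ⟨w, hwmem, hw0, hwa⟩ := og2 a w' hli
    rw [mem_span_pair] at hwmem
    obtain ⟨α, β, hwe⟩ := hwmem
    -- β ≠ 0
    have hβ : β ≠ 0 := by
      rintro rfl
      rw [zero_smul, add_zero] at hwe
      have hα : α ≠ 0 := by rintro rfl; rw [zero_smul] at hwe; exact hw0 hwe.symm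
      apply hirr a ha0
      refine og1 a w w (hsymm w a hwa) (hsymm w a hwa) a ?_ ha0
      have : ({w, w} : Set H) = {w} := by simp
      rw [this, mem_span_singleton]
      exact ⟨α⁻¹, by rw [← hwe, smul_smul, inv_mul_cancel₀ hα, one_smul]⟩
    -- w perp to everything in t'
    have hwperp : ∀ u ∈ (insert a t' : Finset H), perp w u := by
      intro u hu
      rcases Finset.mem_insert.mp hu with rfl | hu'
      · exact hwa
      · have hua : perp u a := hp u (Finset.mem_insert_of_mem hu') a
          (Finset.mem_insert_self a t') (fun h => hat' (h ▸ hu'))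
        have huw' : perp u w' := hsymm w' u (hw'perp u hu')
        refine hsymm u w (og1 u a w' hua huw' w ?_ hw0)
        rw [mem_span_pair]; exact ⟨α, β, hwe⟩
    -- span equality
    have hspan : span K (insert w ((insert a t' : Finset H) : Set H)) =
        span K (insert v ((insert a t' : Finset H) : Set H)) := by
      have key : span K (insert w ((insert a t' : Finset H) : Set H)) =
          span K (insert w' ((insert a t' : Finset H) : Set H)) := by
        apply le_antisymm
        · rw [span_le, Set.insert_subset_iff]
          constructor
          · rw [← hwe]
            exact add_mem (smul_mem _ _ (subset_span (Set.mem_insert_iff.mpr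
                (Or.inr (by rw [Finset.coe_insert]; exact Set.mem_insert _ _)))))
              (smul_mem _ _ (subset_span (Set.mem_insert _ _)))
          · exact Set.Subset.trans (Set.subset_insert _ _) subset_span
        · rw [span_le, Set.insert_subset_iff]
          constructor
          · have : w' = β⁻¹ • (w - α • a) := by
              rw [← hwe]; rw [add_sub_cancel_left, smul_smul, inv_mul_cancel₀ hβ, one_smul]
            rw [this]
            refine smul_mem _ _ (sub_mem (subset_span (Set.mem_insert _ _))
              (smul_mem _ _ (subset_span (Set.mem_insert_iff.mpr
                (Or.inr (by rw [Finset.coe_insert]; exact Set.mem_insert _ _))))))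
          · exact Set.Subset.trans (Set.subset_insert _ _) subset_span
      rw [key, Finset.coe_insert, Set.insert_comm, Set.insert_comm v a,
        span_insert a, span_insert a, hw'span]
    exact ⟨w, hw0, hwperp, hspan⟩

end Aux

theorem stmt_4 {K : Type*} [DivisionRing K] {H : Type*} [AddCommGroup H] [Module K H]
    (hdim : 3 ≤ Module.rank K H)
    (perp : H → H → Prop)
    (hsymm : ∀ u v : H, perp u v → perp v u)
    (hirr : ∀ u : H, u ≠ 0 → ¬ perp u u)
    (og1 : ∀ w u v : H, perp w u → perp w v →
      ∀ x ∈ Submodule.span K ({u, v} : Set H), x ≠ 0 → perp w x)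
    (og2 : ∀ u v : H, LinearIndependent K ![u, v] →
      ∃ w ∈ Submodule.span K ({u, v} : Set H), w ≠ 0 ∧ perp w u)
    (U : Submodule K H) (hU : FiniteDimensional K U)
    (s : Finset H) (hsU : ∀ u ∈ s, u ∈ U) (hs0 : ∀ u ∈ s, u ≠ 0)
    (hsperp : ∀ u ∈ s, ∀ v ∈ s, u ≠ v → perp u v) :
    ∃ t : Finset H, s ⊆ t ∧ (∀ u ∈ t, u ≠ 0) ∧
      (∀ u ∈ t, ∀ v ∈ t, u ≠ v → perp u v) ∧
      LinearIndependent K (Subtype.val : {x : H // x ∈ t} → H) ∧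
      Submodule.span K (t : Set H) = U := by
  classical
  -- Main induction on `finrank U - card t`.
  suffices h : ∀ (n : ℕ) (t : Finset H), (∀ u ∈ t, u ∈ U) → (∀ u ∈ t, u ≠ 0) →
      (∀ u ∈ t, ∀ v ∈ t, u ≠ v → perp u v) → Module.finrank K U - t.card ≤ n →
      ∃ t' : Finset H, t ⊆ t' ∧ (∀ u ∈ t', u ≠ 0) ∧
        (∀ u ∈ t', ∀ v ∈ t', u ≠ v → perp u v) ∧
        LinearIndependent K (Subtype.val : {x : H // x ∈ t'} → H) ∧
        Submodule.span K (t' : Set H) = U by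
    exact h (Module.finrank K U) s hsU hs0 hsperp (Nat.sub_le _ _)
  intro n
  induction n with
  | zero =>
    intro t htU ht0 htperp hcard
    have hli : LinearIndependent K (fun x : (t : Set H) => (x : H)) :=
      perp_linearIndependent perp hsymm hirr og1 t ht0 htperp
    have hle : span K (t : Set H) ≤ U := span_le.mpr htU
    have hrank : Module.finrank K (span K (t : Set H)) = t.card :=
      finrank_span_finset_eq_card hli
    have : span K (t : Set H) = U := by
      apply Submodule.eq_of_le_of_finrank_le hle
      rw [hrank]; omega
    exact ⟨t, subset_rfl, ht0, htperp, hli, this⟩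
  | succ n ih =>
    intro t htU ht0 htperp hcard
    have hli : LinearIndependent K (fun x : (t : Set H) => (x : H)) :=
      perp_linearIndependent perp hsymm hirr og1 t ht0 htperp
    have hle : span K (t : Set H) ≤ U := span_le.mpr htU
    by_cases heq : span K (t : Set H) = U
    · exact ⟨t, subset_rfl, ht0, htperp, hli, heq⟩
    · obtain ⟨v, hvU, hvt⟩ := SetLike.exists_of_lt (lt_of_le_of_ne hle heq)
      obtain ⟨w, hw0, hwperp, hwspan⟩ :=
        gram_schmidt perp hsymm hirr og1 og2 t ht0 htperp v hvt
      have hwU : w ∈ U := by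
        have : w ∈ span K (insert w (t : Set H)) := subset_span (Set.mem_insert _ _)
        rw [hwspan] at this
        exact span_le.mpr (Set.insert_subset hvU htU) this
      have hwnotspan : w ∉ span K (t : Set H) := by
        intro hmem
        apply hvt
        have h1 : span K (insert w (t : Set H)) ≤ span K (t : Set H) := by
          rw [span_le, Set.insert_subset_iff]
          exact ⟨hmem, subset_span⟩
        exact h1 (hwspan ▸ subset_span (Set.mem_insert _ _))
      have hwt : w ∉ t := fun h => hwnotspan (subset_span h)
      have hcard' : (insert w t).card = t.card + 1 := Finset.card_insert_of_notMem hwt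
      -- strict rank inequality to decrement n
      have hlt : t.card < Module.finrank K U := by
        have hrank : Module.finrank K (span K (t : Set H)) = t.card :=
          finrank_span_finset_eq_card hli
        have := Submodule.finrank_lt_finrank_of_lt (lt_of_le_of_ne hle heq)
        omega
      have h0' : ∀ u ∈ insert w t, u ≠ 0 := by
        intro u hu
        rcases Finset.mem_insert.mp hu with rfl | hu'
        · exact hw0
        · exact ht0 u hu'
      have hU' : ∀ u ∈ insert w t, u ∈ U := by
        intro u hu
        rcases Finset.mem_insert.mp hu with rfl | hu'
        · exact hwU
        · exact htU u hu'
      have hperp' : ∀ u ∈ insert w t, ∀ v ∈ insert w t, u ≠ v → perp u v := by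
        intro u hu x hx hux
        rcases Finset.mem_insert.mp hu with rfl | hu' <;>
          rcases Finset.mem_insert.mp hx with rfl | hx'
        · exact absurd rfl hux
        · exact hwperp x hx'
        · exact hsymm x u (hwperp u hu')
        · exact htperp u hu' x hx' hux
      obtain ⟨t', ht'sub, h1, h2, h3, h4⟩ := ih (insert w t) hU' h0' hperp' (by omega)
      exact ⟨t', subset_trans (Finset.subset_insert _ _) ht'sub, h1, h2, h3, h4⟩
end

section
/- Let H be a linear space of dimension ≥ 3 over a division ring K and let ⊥ be an orthogeometry relation on H. Then: (a) for any nonzero u, v ∈ H, if every nonzero w with w ⊥ u also satisfies w ⊥ v, then v is a scalar multiple of u (the induced orthoset on one-dimensional subspaces is point-closed); (b) for any nonzero u ∈ H, the set {v ∈ H : v = 0 or v ⊥ u} is a K-subspace of H which is maximal among proper subspaces of H (a hyperplane). -/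
/-!
The polar `{v | v = 0 ∨ v ⊥ u}` of a nonzero `u` is closed under addition and scaling by (OG1),
and it misses `u`. By (OG2), every plane through `u` meets the polar outside `K ∙ u`, so the
polar together with `u` spans `H`: the polar is a complement of the atom `K ∙ u`, hence a coatom.
Point-closedness is (OG2) once more: if `v ∉ K ∙ u`, a vector `w ⊥ u` of the plane
`span {u, v}` is also orthogonal to `v`, hence to itself.
-/

open Submodule

structure IsOrthogeometry (K : Type*) {H : Type*} [DivisionRing K] [AddCommGroup H]
    [Module K H] (perp : H → H → Prop) : Prop where
  symm : ∀ u v : H, perp u v → perp v u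
  irrefl : ∀ u : H, u ≠ 0 → ¬ perp u u
  perp_of_mem_span_pair : ∀ w u v : H, perp w u → perp w v →
    ∀ x ∈ span K ({u, v} : Set H), x ≠ 0 → perp w x
  exists_perp_mem_span_pair : ∀ u v : H, LinearIndependent K ![u, v] →
    ∃ w ∈ span K ({u, v} : Set H), w ≠ 0 ∧ perp w u

namespace IsOrthogeometry

variable {K H : Type*} [DivisionRing K] [AddCommGroup H] [Module K H] {perp : H → H → Prop}

theorem perp_of_mem_span_pair_of_perp {u a b : H} (h : IsOrthogeometry K perp)
    (ha : perp a u) (hb : perp b u) {x : H} (hx : x ∈ span K ({a, b} : Set H)) :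
    x = 0 ∨ perp x u := by
  by_cases hx0 : x = 0
  · exact .inl hx0
  · exact .inr <| h.symm _ _ <|
      h.perp_of_mem_span_pair u a b (h.symm _ _ ha) (h.symm _ _ hb) x hx hx0

def polar (h : IsOrthogeometry K perp) (u : H) : Submodule K H where
  carrier := {v | v = 0 ∨ perp v u}
  zero_mem' := .inl rfl
  add_mem' := by
    rintro a b (rfl | ha) (rfl | hb)
    · exact .inl (add_zero 0)
    · simpa using Or.inr hb
    · simpa using Or.inr ha
    · exact h.perp_of_mem_span_pair_of_perp ha hb
        (add_mem (subset_span (Set.mem_insert a _)) (subset_span (Set.mem_insert_of_mem a rfl)))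
  smul_mem' := by
    rintro c v (rfl | hv)
    · exact .inl (smul_zero c)
    · exact h.perp_of_mem_span_pair_of_perp hv hv (smul_mem _ c (subset_span (Set.mem_insert v _)))

theorem self_notMem_polar (h : IsOrthogeometry K perp) {u : H} (hu : u ≠ 0) :
    u ∉ h.polar u := by
  rintro (hu0 | huu)
  exacts [hu hu0, h.irrefl u hu huu]

theorem disjoint_polar_span_singleton (h : IsOrthogeometry K perp) {u : H} (hu : u ≠ 0) :
    Disjoint (h.polar u) (K ∙ u) :=
  (disjoint_span_singleton' hu).2 (h.self_notMem_polar hu)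

theorem exists_perp_of_notMem_span_singleton (h : IsOrthogeometry K perp) {u y : H}
    (hu : u ≠ 0) (hy : y ∉ K ∙ u) :
    ∃ w ∈ span K ({u, y} : Set H), w ≠ 0 ∧ perp w u := by
  refine h.exists_perp_mem_span_pair u y ((LinearIndependent.pair_iff' hu).2 fun a hay => ?_)
  exact hy (mem_span_singleton.2 ⟨a, hay⟩)

theorem mem_span_singleton_of_forall_perp (h : IsOrthogeometry K perp) {u v : H} (hu : u ≠ 0)
    (huv : ∀ w : H, w ≠ 0 → perp w u → perp w v) : v ∈ K ∙ u := by
  by_contra hv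
  obtain ⟨w, hw, hw0, hwu⟩ := h.exists_perp_of_notMem_span_singleton hu hv
  exact h.irrefl w hw0 (h.perp_of_mem_span_pair w u v hwu (huv w hw0 hwu) w hw hw0)

theorem polar_sup_span_singleton (h : IsOrthogeometry K perp) {u : H} (hu : u ≠ 0) :
    h.polar u ⊔ (K ∙ u) = ⊤ := by
  refine eq_top_iff.2 fun y _ => ?_
  by_cases hy : y ∈ K ∙ u
  · exact mem_sup_right hy
  obtain ⟨w, hw, hw0, hwu⟩ := h.exists_perp_of_notMem_span_singleton hu hy
  have hwpolar : w ∈ h.polar u := .inr hwu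
  have hwu' : w ∉ K ∙ u := fun hwu' =>
    hw0 (disjoint_def.1 (h.disjoint_polar_span_singleton hu) w hwpolar hwu')
  rw [Set.pair_comm] at hw
  have hy' : y ∈ span K ({w, u} : Set H) := mem_span_insert_exchange hw hwu'
  rw [span_insert] at hy'
  exact sup_le_sup_right (span_singleton_le_iff_mem _ _ |>.2 hwpolar) _ hy'

theorem isCoatom_polar (h : IsOrthogeometry K perp) {u : H} (hu : u ≠ 0) :
    IsCoatom (h.polar u) :=
  (IsCompl.of_eq (h.disjoint_polar_span_singleton hu).eq_bot
    (h.polar_sup_span_singleton hu)).isCoatom_iff_isAtom.2 (nonzero_span_atom u hu)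

end IsOrthogeometry

theorem stmt_5_general {K : Type*} [DivisionRing K] {H : Type*} [AddCommGroup H] [Module K H]
    (perp : H → H → Prop)
    (hsymm : ∀ u v : H, perp u v → perp v u)
    (hirr : ∀ u : H, u ≠ 0 → ¬ perp u u)
    (og1 : ∀ w u v : H, perp w u → perp w v →
      ∀ x ∈ Submodule.span K ({u, v} : Set H), x ≠ 0 → perp w x)
    (og2 : ∀ u v : H, LinearIndependent K ![u, v] →
      ∃ w ∈ Submodule.span K ({u, v} : Set H), w ≠ 0 ∧ perp w u) :
    (∀ u v : H, u ≠ 0 → v ≠ 0 →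
      (∀ w : H, w ≠ 0 → perp w u → perp w v) → ∃ α : K, v = α • u) ∧
    (∀ u : H, u ≠ 0 → ∃ S : Submodule K H,
      (S : Set H) = {v : H | v = 0 ∨ perp v u} ∧ IsCoatom S) := by
  have h : IsOrthogeometry K perp := ⟨hsymm, hirr, og1, og2⟩
  refine ⟨fun u v hu _ huv => ?_, fun u hu => ⟨h.polar u, rfl, h.isCoatom_polar hu⟩⟩
  obtain ⟨α, hα⟩ := mem_span_singleton.1 (h.mem_span_singleton_of_forall_perp hu huv)
  exact ⟨α, hα.symm⟩

theorem stmt_5 {K : Type*} [DivisionRing K] {H : Type*} [AddCommGroup H] [Module K H]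
    (hdim : 3 ≤ Module.rank K H)
    (perp : H → H → Prop)
    (hsymm : ∀ u v : H, perp u v → perp v u)
    (hirr : ∀ u : H, u ≠ 0 → ¬ perp u u)
    (og1 : ∀ w u v : H, perp w u → perp w v →
      ∀ x ∈ Submodule.span K ({u, v} : Set H), x ≠ 0 → perp w x)
    (og2 : ∀ u v : H, LinearIndependent K ![u, v] →
      ∃ w ∈ Submodule.span K ({u, v} : Set H), w ≠ 0 ∧ perp w u) :
    (∀ u v : H, u ≠ 0 → v ≠ 0 →
      (∀ w : H, w ≠ 0 → perp w u → perp w v) → ∃ α : K, v = α • u) ∧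
    (∀ u : H, u ≠ 0 → ∃ S : Submodule K H,
      (S : Set H) = {v : H | v = 0 ∨ perp v u} ∧ IsCoatom S) :=
  stmt_5_general perp hsymm hirr og1 og2
end

section
/- Let L be an ortholattice and u ∈ L; for a ≤ u write a' = aᶜ ⊓ u. Then the following are equivalent: (1) for all a, b ∈ L with a ≤ b ≤ u there is c ∈ L with c ≤ aᶜ and a ⊔ c = b; (2) the interval {a ∈ L : a ≤ u} equipped with the map a ↦ a' is an orthomodular lattice, i.e., for every a ≤ u one has a'' = a, a ⊓ a' = ⊥ and a ⊔ a' = u, the map a ↦ a' is antitone on the interval, and for all a ≤ b ≤ u there is c ≤ a' with a ⊔ c = b. -/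
/-!
Only (1) ⇒ (2) has content. A relative complement `c` of `a` in some `b ≤ u` with `c ≤ aᶜ`
also lies below `u`, hence below `a' = aᶜ ⊓ u`; taking `b = u` gives `a ⊔ a' = u`. Taking
`b = a''`, which lies above `a` because `ᶜ` is an antitone involution, the complement `c` lies
below both `a'` and `a'ᶜ`, so `c = ⊥` and `a'' = a`.
-/

section Lattice

variable {L : Type*} [Lattice L] {oc : L → L} {u : L}

theorem exists_le_oc_inf_sup_eq (h : ∀ a b : L, a ≤ b → b ≤ u → ∃ c : L, c ≤ oc a ∧ a ⊔ c = b)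
    {a b : L} (hab : a ≤ b) (hbu : b ≤ u) : ∃ c : L, c ≤ oc a ⊓ u ∧ a ⊔ c = b := by
  obtain ⟨c, hc, rfl⟩ := h a b hab hbu
  exact ⟨c, le_inf hc (le_sup_right.trans hbu), rfl⟩

theorem sup_oc_inf_eq (h : ∀ a b : L, a ≤ b → b ≤ u → ∃ c : L, c ≤ oc a ∧ a ⊔ c = b)
    {a : L} (ha : a ≤ u) : a ⊔ (oc a ⊓ u) = u := by
  obtain ⟨c, hc, hac⟩ := exists_le_oc_inf_sup_eq h ha le_rfl
  exact le_antisymm (sup_le ha inf_le_right) (hac ▸ sup_le_sup_left hc a)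

theorem le_oc_oc_inf (hanti : Antitone oc) (hinv : Function.Involutive oc) (a : L) :
    a ≤ oc (oc a ⊓ u) :=
  (hinv a).ge.trans (hanti inf_le_left)

end Lattice

theorem oc_oc_inf_inf_eq {L : Type*} [Lattice L] [OrderBot L] {oc : L → L} {u : L}
    (hanti : Antitone oc) (hinv : Function.Involutive oc) (hbot : ∀ a : L, a ⊓ oc a = ⊥)
    (h : ∀ a b : L, a ≤ b → b ≤ u → ∃ c : L, c ≤ oc a ∧ a ⊔ c = b) {a : L} (ha : a ≤ u) :
    oc (oc a ⊓ u) ⊓ u = a := by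
  obtain ⟨c, hc, hac⟩ :=
    exists_le_oc_inf_sup_eq h (le_inf (le_oc_oc_inf hanti hinv a) ha) inf_le_right
  have hc_bot : c = ⊥ :=
    le_bot_iff.mp (hbot (oc a ⊓ u) ▸ le_inf hc ((le_sup_right.trans_eq hac).trans inf_le_left))
  rw [← hac, hc_bot, sup_bot_eq]

theorem stmt_6_general {L : Type*} [Lattice L] [BoundedOrder L] (oc : L → L)
    (hanti : ∀ a b : L, a ≤ b → oc b ≤ oc a)
    (hinv : ∀ a : L, oc (oc a) = a)
    (hbot : ∀ a : L, a ⊓ oc a = ⊥)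
    (u : L) :
    (∀ a b : L, a ≤ b → b ≤ u → ∃ c : L, c ≤ oc a ∧ a ⊔ c = b) ↔
    ((∀ a : L, a ≤ u → oc (oc a ⊓ u) ⊓ u = a) ∧
     (∀ a : L, a ≤ u → a ⊓ (oc a ⊓ u) = ⊥) ∧
     (∀ a : L, a ≤ u → a ⊔ (oc a ⊓ u) = u) ∧
     (∀ a b : L, a ≤ b → b ≤ u → oc b ⊓ u ≤ oc a ⊓ u) ∧
     (∀ a b : L, a ≤ b → b ≤ u → ∃ c : L, c ≤ oc a ⊓ u ∧ a ⊔ c = b)) := by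
  have hanti' : Antitone oc := fun a b => hanti a b
  constructor
  · intro h
    refine ⟨fun a ha => oc_oc_inf_inf_eq hanti' hinv hbot h ha, fun a _ => ?_,
      fun a ha => sup_oc_inf_eq h ha, fun a b hab _ => inf_le_inf_right u (hanti a b hab),
      fun a b hab hbu => exists_le_oc_inf_sup_eq h hab hbu⟩
    exact ((disjoint_iff.mpr (hbot a)).mono_right inf_le_left).eq_bot
  · rintro ⟨-, -, -, -, h⟩ a b hab hbu
    obtain ⟨c, hc, hac⟩ := h a b hab hbu
    exact ⟨c, hc.trans inf_le_left, hac⟩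

theorem stmt_6 {L : Type*} [Lattice L] [BoundedOrder L] (oc : L → L)
    (hanti : ∀ a b : L, a ≤ b → oc b ≤ oc a)
    (hinv : ∀ a : L, oc (oc a) = a)
    (hbot : ∀ a : L, a ⊓ oc a = ⊥)
    (htop : ∀ a : L, a ⊔ oc a = ⊤)
    (u : L) :
    (∀ a b : L, a ≤ b → b ≤ u → ∃ c : L, c ≤ oc a ∧ a ⊔ c = b) ↔
    ((∀ a : L, a ≤ u → oc (oc a ⊓ u) ⊓ u = a) ∧
     (∀ a : L, a ≤ u → a ⊓ (oc a ⊓ u) = ⊥) ∧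
     (∀ a : L, a ≤ u → a ⊔ (oc a ⊓ u) = u) ∧
     (∀ a b : L, a ≤ b → b ≤ u → oc b ⊓ u ≤ oc a ⊓ u) ∧
     (∀ a b : L, a ≤ b → b ≤ u → ∃ c : L, c ≤ oc a ⊓ u ∧ a ⊔ c = b)) :=
  stmt_6_general oc hanti hinv hbot u
end

section
/- Let L be an atomistic ortholattice such that for any distinct atoms p and q there is an atom r with r ≤ pᶜ and p ⊔ q = p ⊔ r. Then: (i) an element a of L is finite if and only if a is ⊥ or the join of finitely many mutually orthogonal atoms; (ii) if a is finite and p is an atom with p ≰ a, then there is an atom q with q ≤ aᶜ and a ⊔ p = a ⊔ q; (iii) for any finite elements a, b with a ≤ b there is a finite element c with c ≤ aᶜ and b = a ⊔ c. -/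
/-- A finite element of a bounded lattice: `⊥` or a join of finitely many atoms. -/
def FinElt {L : Type*} [Lattice L] [BoundedOrder L] (a : L) : Prop :=
  a = ⊥ ∨ ∃ s : Finset L, (∀ p ∈ s, IsAtom p) ∧ a = s.sup id

section Aux

variable {L : Type*} [Lattice L] [BoundedOrder L] {oc : L → L}

lemma aux_ocbot (htop : ∀ a : L, a ⊔ oc a = ⊤) : oc (⊥ : L) = ⊤ := by
  have := htop ⊥; simpa using this

lemma aux_orthsymm (hanti : ∀ a b : L, a ≤ b → oc b ≤ oc a)
    (hinv : ∀ a : L, oc (oc a) = a) {a b : L} (h : a ≤ oc b) : b ≤ oc a := by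
  have := hanti _ _ h; rwa [hinv] at this

lemma aux_demorgan (hanti : ∀ a b : L, a ≤ b → oc b ≤ oc a)
    (hinv : ∀ a : L, oc (oc a) = a) (a b : L) : oc (a ⊔ b) = oc a ⊓ oc b := by
  apply le_antisymm
  · exact le_inf (hanti _ _ le_sup_left) (hanti _ _ le_sup_right)
  · have h1 : a ≤ oc (oc a ⊓ oc b) := aux_orthsymm hanti hinv inf_le_left
    have h2 : b ≤ oc (oc a ⊓ oc b) := aux_orthsymm hanti hinv inf_le_right
    exact aux_orthsymm hanti hinv (sup_le h1 h2)

lemma aux_lemB (hanti : ∀ a b : L, a ≤ b → oc b ≤ oc a)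
    (hinv : ∀ a : L, oc (oc a) = a)
    (htop : ∀ a : L, a ⊔ oc a = ⊤)
    (h2 : ∀ p q : L, IsAtom p → IsAtom q → p ≠ q →
      ∃ r : L, IsAtom r ∧ r ≤ oc p ∧ p ⊔ q = p ⊔ r) :
    ∀ n (t : Finset L), t.card = n → (∀ p ∈ t, IsAtom p) →
      (∀ p ∈ t, ∀ q ∈ t, p ≠ q → p ≤ oc q) →
      ∀ p : L, IsAtom p → ¬ p ≤ t.sup id →
      ∃ q : L, IsAtom q ∧ q ≤ oc (t.sup id) ∧ t.sup id ⊔ p = t.sup id ⊔ q := by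
  classical
  intro n
  induction n with
  | zero =>
    intro t hcard _ _ p hp _
    have ht : t = ∅ := Finset.card_eq_zero.mp hcard
    subst ht
    refine ⟨p, hp, ?_, rfl⟩
    simp [aux_ocbot htop]
  | succ n ih =>
    intro t hcard hat horth p hp hple
    obtain ⟨r, hr⟩ := Finset.card_pos.mp (by omega : 0 < t.card)
    set t' := t.erase r with ht'
    have hins : insert r t' = t := Finset.insert_erase hr
    have hsup : t.sup id = r ⊔ t'.sup id := by
      rw [← hins, Finset.sup_insert]; rfl
    set A := t'.sup id with hA
    have hcard' : t'.card = n := by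
      rw [ht', Finset.card_erase_of_mem hr, hcard]; omega
    have hat' : ∀ p ∈ t', IsAtom p := fun p hpm => hat p (Finset.mem_of_mem_erase hpm)
    have horth' : ∀ p ∈ t', ∀ q ∈ t', p ≠ q → p ≤ oc q :=
      fun p hpm q hqm => horth p (Finset.mem_of_mem_erase hpm) q (Finset.mem_of_mem_erase hqm)
    have hAr : A ≤ oc r := by
      apply Finset.sup_le
      intro b hb
      exact horth b (Finset.mem_of_mem_erase hb) r hr (Finset.ne_of_mem_erase hb)
    have hrA : r ≤ oc A := aux_orthsymm hanti hinv hAr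
    have hpA : ¬ p ≤ A := by
      intro h
      exact hple (h.trans (by rw [hsup]; exact le_sup_right))
    obtain ⟨q', hq', hq'le, hq'eq⟩ := ih t' hcard' hat' horth' p hp hpA
    have hrq' : r ≠ q' := by
      intro h
      apply hple
      have hx : p ≤ A ⊔ q' := le_sup_right.trans hq'eq.le
      rw [hsup, sup_comm, h]
      exact hx
    obtain ⟨t₀, ht₀, ht₀le, ht₀eq⟩ := h2 r q' (hat r hr) hq' hrq'
    have ht₀A : t₀ ≤ oc A := by
      have : t₀ ≤ r ⊔ q' := ht₀eq ▸ le_sup_right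
      exact this.trans (sup_le hrA hq'le)
    refine ⟨t₀, ht₀, ?_, ?_⟩
    · rw [hsup, aux_demorgan hanti hinv]
      exact le_inf ht₀le ht₀A
    · rw [hsup]
      calc r ⊔ A ⊔ p = r ⊔ (A ⊔ p) := sup_assoc r A p
        _ = r ⊔ (A ⊔ q') := by rw [hq'eq]
        _ = r ⊔ q' ⊔ A := by rw [sup_comm A q', ← sup_assoc]
        _ = r ⊔ t₀ ⊔ A := by rw [ht₀eq]
        _ = r ⊔ A ⊔ t₀ := by rw [sup_assoc, sup_comm t₀ A, ← sup_assoc]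

lemma aux_lemA (hanti : ∀ a b : L, a ≤ b → oc b ≤ oc a)
    (hinv : ∀ a : L, oc (oc a) = a)
    (hbot : ∀ a : L, a ⊓ oc a = ⊥)
    (htop : ∀ a : L, a ⊔ oc a = ⊤)
    (h2 : ∀ p q : L, IsAtom p → IsAtom q → p ≠ q →
      ∃ r : L, IsAtom r ∧ r ≤ oc p ∧ p ⊔ q = p ⊔ r) :
    ∀ n (s : Finset L), s.card = n → (∀ p ∈ s, IsAtom p) →
      ∃ t : Finset L, (∀ p ∈ t, IsAtom p) ∧ (∀ p ∈ t, ∀ q ∈ t, p ≠ q → p ≤ oc q) ∧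
        s.sup id = t.sup id := by
  classical
  intro n
  induction n with
  | zero =>
    intro s hcard _
    have hs : s = ∅ := Finset.card_eq_zero.mp hcard
    subst hs
    exact ⟨∅, by simp, by simp, rfl⟩
  | succ n ih =>
    intro s hcard hat
    obtain ⟨r, hr⟩ := Finset.card_pos.mp (by omega : 0 < s.card)
    set s' := s.erase r with hs'
    have hins : insert r s' = s := Finset.insert_erase hr
    have hsup : s.sup id = r ⊔ s'.sup id := by
      rw [← hins, Finset.sup_insert]; rfl
    have hcard' : s'.card = n := by
      rw [hs', Finset.card_erase_of_mem hr, hcard]; omega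
    obtain ⟨t', hat', horth', heq'⟩ := ih s' hcard' (fun p hpm => hat p (Finset.mem_of_mem_erase hpm))
    set A := t'.sup id with hA
    by_cases hrA : r ≤ A
    · refine ⟨t', hat', horth', ?_⟩
      rw [hsup, heq', sup_eq_right.mpr hrA]
    · obtain ⟨q, hq, hqle, hqeq⟩ :=
        aux_lemB hanti hinv htop h2 t'.card t' rfl hat' horth' r (hat r hr) hrA
      have hqnot : q ∉ t' := by
        intro hmem
        have h1 : q ≤ A := Finset.le_sup (f := id) hmem
        have : q ≤ (⊥ : L) := by
          rw [← hbot A]; exact le_inf h1 hqle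
        exact hq.1 (le_bot_iff.mp this)
      refine ⟨insert q t', ?_, ?_, ?_⟩
      · intro p hpm
        rcases Finset.mem_insert.mp hpm with rfl | hpm
        · exact hq
        · exact hat' p hpm
      · intro p hpm b hbm hpb
        rcases Finset.mem_insert.mp hpm with rfl | hpm'
        · rcases Finset.mem_insert.mp hbm with rfl | hbm'
          · exact absurd rfl hpb
          · exact hqle.trans (hanti _ _ (Finset.le_sup (f := id) hbm'))
        · rcases Finset.mem_insert.mp hbm with rfl | hbm'
          · exact aux_orthsymm hanti hinv
              (hqle.trans (hanti _ _ (Finset.le_sup (f := id) hpm')))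
          · exact horth' p hpm' b hbm' hpb
      · rw [hsup, heq', Finset.sup_insert]
        show r ⊔ A = id q ⊔ A
        rw [sup_comm r A, hqeq, sup_comm]
        rfl

lemma aux_lemII (hanti : ∀ a b : L, a ≤ b → oc b ≤ oc a)
    (hinv : ∀ a : L, oc (oc a) = a)
    (hbot : ∀ a : L, a ⊓ oc a = ⊥)
    (htop : ∀ a : L, a ⊔ oc a = ⊤)
    (h2 : ∀ p q : L, IsAtom p → IsAtom q → p ≠ q →
      ∃ r : L, IsAtom r ∧ r ≤ oc p ∧ p ⊔ q = p ⊔ r) :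
    ∀ a p : L, FinElt a → IsAtom p → ¬ p ≤ a →
      ∃ q : L, IsAtom q ∧ q ≤ oc a ∧ a ⊔ p = a ⊔ q := by
  intro a p ha hp hpa
  rcases ha with rfl | ⟨s, hs, rfl⟩
  · exact ⟨p, hp, by simp [aux_ocbot htop], rfl⟩
  · obtain ⟨t, hat, horth, heq⟩ := aux_lemA hanti hinv hbot htop h2 s.card s rfl hs
    rw [heq] at hpa ⊢
    exact aux_lemB hanti hinv htop h2 t.card t rfl hat horth p hp hpa

lemma aux_finSup {a b : L} (ha : FinElt a) (hb : FinElt b) : FinElt (a ⊔ b) := by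
  classical
  rcases ha with rfl | ⟨s, hs, rfl⟩
  · simpa using hb
  · rcases hb with rfl | ⟨s', hs', rfl⟩
    · rw [sup_bot_eq]; exact Or.inr ⟨s, hs, rfl⟩
    · refine Or.inr ⟨s ∪ s', ?_, ?_⟩
      · intro p hp
        rcases Finset.mem_union.mp hp with h | h
        · exact hs p h
        · exact hs' p h
      · rw [Finset.sup_union]

lemma aux_finAtom {q : L} (hq : IsAtom q) : FinElt q :=
  Or.inr ⟨{q}, by simpa using hq, by simp⟩

lemma aux_lemC (hanti : ∀ a b : L, a ≤ b → oc b ≤ oc a)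
    (hinv : ∀ a : L, oc (oc a) = a)
    (hbot : ∀ a : L, a ⊓ oc a = ⊥)
    (htop : ∀ a : L, a ⊔ oc a = ⊤)
    (h2 : ∀ p q : L, IsAtom p → IsAtom q → p ≠ q →
      ∃ r : L, IsAtom r ∧ r ≤ oc p ∧ p ⊔ q = p ⊔ r) :
    ∀ n (t : Finset L), t.card = n → (∀ p ∈ t, IsAtom p) →
      ∀ a c : L, FinElt a → FinElt c → c ≤ oc a →
      ∃ c' : L, FinElt c' ∧ c' ≤ oc a ∧ a ⊔ c ⊔ t.sup id = a ⊔ c' := by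
  classical
  intro n
  induction n with
  | zero =>
    intro t hcard _ a c ha hc hcle
    have ht : t = ∅ := Finset.card_eq_zero.mp hcard
    subst ht
    exact ⟨c, hc, hcle, by simp⟩
  | succ n ih =>
    intro t hcard hat a c ha hc hcle
    obtain ⟨r, hr⟩ := Finset.card_pos.mp (by omega : 0 < t.card)
    set t' := t.erase r with ht'
    have hins : insert r t' = t := Finset.insert_erase hr
    have hsup : t.sup id = r ⊔ t'.sup id := by
      rw [← hins, Finset.sup_insert]; rfl
    have hcard' : t'.card = n := by
      rw [ht', Finset.card_erase_of_mem hr, hcard]; omega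
    have hat' : ∀ p ∈ t', IsAtom p := fun p hpm => hat p (Finset.mem_of_mem_erase hpm)
    by_cases hrle : r ≤ a ⊔ c
    · obtain ⟨c', hc', hc'le, hc'eq⟩ := ih t' hcard' hat' a c ha hc hcle
      refine ⟨c', hc', hc'le, ?_⟩
      calc a ⊔ c ⊔ t.sup id = a ⊔ c ⊔ r ⊔ t'.sup id := by rw [hsup, ← sup_assoc]
        _ = a ⊔ c ⊔ t'.sup id := by rw [sup_eq_left.mpr hrle]
        _ = a ⊔ c' := hc'eq
    · obtain ⟨q, hq, hqle, hqeq⟩ := aux_lemII hanti hinv hbot htop h2 (a ⊔ c) r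
        (aux_finSup ha hc) (hat r hr) hrle
      have hcq : c ⊔ q ≤ oc a := sup_le hcle (hqle.trans (hanti _ _ le_sup_left))
      obtain ⟨c', hc', hc'le, hc'eq⟩ := ih t' hcard' hat' a (c ⊔ q) ha
        (aux_finSup hc (aux_finAtom hq)) hcq
      refine ⟨c', hc', hc'le, ?_⟩
      calc a ⊔ c ⊔ t.sup id = a ⊔ c ⊔ r ⊔ t'.sup id := by rw [hsup, ← sup_assoc]
        _ = a ⊔ c ⊔ q ⊔ t'.sup id := by rw [hqeq]
        _ = a ⊔ (c ⊔ q) ⊔ t'.sup id := by rw [sup_assoc a c q]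
        _ = a ⊔ c' := hc'eq

end Aux

theorem stmt_7 {L : Type*} [Lattice L] [BoundedOrder L] (oc : L → L)
    (hanti : ∀ a b : L, a ≤ b → oc b ≤ oc a)
    (hinv : ∀ a : L, oc (oc a) = a)
    (hbot : ∀ a : L, a ⊓ oc a = ⊥)
    (htop : ∀ a : L, a ⊔ oc a = ⊤)
    (hatomistic : ∀ a b : L, (∀ p : L, IsAtom p → p ≤ a → p ≤ b) → a ≤ b)
    (h2 : ∀ p q : L, IsAtom p → IsAtom q → p ≠ q →
      ∃ r : L, IsAtom r ∧ r ≤ oc p ∧ p ⊔ q = p ⊔ r) :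
    (∀ a : L, FinElt a ↔ (a = ⊥ ∨ ∃ s : Finset L, (∀ p ∈ s, IsAtom p) ∧
        (∀ p ∈ s, ∀ q ∈ s, p ≠ q → p ≤ oc q) ∧ a = s.sup id)) ∧
    (∀ a p : L, FinElt a → IsAtom p → ¬ p ≤ a →
      ∃ q : L, IsAtom q ∧ q ≤ oc a ∧ a ⊔ p = a ⊔ q) ∧
    (∀ a b : L, FinElt a → FinElt b → a ≤ b →
      ∃ c : L, FinElt c ∧ c ≤ oc a ∧ b = a ⊔ c) := by
  refine ⟨?_, ?_, ?_⟩
  · intro a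
    constructor
    · rintro (rfl | ⟨s, hs, rfl⟩)
      · exact Or.inl rfl
      · obtain ⟨t, hat, horth, heq⟩ := aux_lemA hanti hinv hbot htop h2 s.card s rfl hs
        exact Or.inr ⟨t, hat, horth, heq⟩
    · rintro (rfl | ⟨s, hs, _, rfl⟩)
      · exact Or.inl rfl
      · exact Or.inr ⟨s, hs, rfl⟩
  · exact aux_lemII hanti hinv hbot htop h2
  · intro a b ha hb hab
    rcases hb with rfl | ⟨t, ht, rfl⟩
    · have haeq : a = ⊥ := le_bot_iff.mp hab
      exact ⟨⊥, Or.inl rfl, bot_le, by simp [haeq]⟩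
    · obtain ⟨c', hc', hc'le, hc'eq⟩ := aux_lemC hanti hinv hbot htop h2 t.card t rfl ht a ⊥ ha
        (Or.inl rfl) bot_le
      refine ⟨c', hc', hc'le, ?_⟩
      rw [← hc'eq, sup_bot_eq, sup_eq_right.mpr hab]
end

section
/- Let L be an atomistic ortholattice such that: for every finite element a and every atom p with p ≰ a, a is covered by a ⊔ p (finite covering property); and for any distinct atoms p and q there is an atom r with r ≤ pᶜ and p ⊔ q = p ⊔ r. Then the set F(L) of finite elements of L is a sublattice of L (closed under ⊓ and ⊔), and it satisfies the modular law: for all finite a, b, c with c ≤ b, (c ⊔ a) ⊓ b = c ⊔ (a ⊓ b). -/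
open Finset Function

section DeMorgan

variable {L : Type*} [Lattice L] {oc : L → L}

theorem le_oc_comm (hanti : Antitone oc) (hinv : Involutive oc) {x y : L} (h : x ≤ oc y) :
    y ≤ oc x :=
  hinv y ▸ hanti h

theorem oc_sup (hanti : Antitone oc) (hinv : Involutive oc) (x y : L) :
    oc (x ⊔ y) = oc x ⊓ oc y :=
  le_antisymm (le_inf (hanti le_sup_left) (hanti le_sup_right)) <| le_oc_comm hanti hinv <|
    sup_le (le_oc_comm hanti hinv inf_le_left) (le_oc_comm hanti hinv inf_le_right)

theorem oc_inf (hanti : Antitone oc) (hinv : Involutive oc) (x y : L) :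
    oc (x ⊓ y) = oc x ⊔ oc y := by
  rw [← hinv (oc x ⊔ oc y), oc_sup hanti hinv, hinv, hinv]

end DeMorgan

def AtomsDetermineLE (L : Type*) [Preorder L] [OrderBot L] : Prop :=
  ∀ a b : L, (∀ p : L, IsAtom p → p ≤ a → p ≤ b) → a ≤ b

def FiniteCoveringProperty (L : Type*) [Lattice L] [BoundedOrder L] : Prop :=
  ∀ a p : L, FinElt a → IsAtom p → ¬ p ≤ a → a ⋖ a ⊔ p

section

variable {L : Type*} [Lattice L] [BoundedOrder L]

theorem finElt_iff {x : L} :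
    FinElt x ↔ ∃ s : Finset L, (∀ p ∈ s, IsAtom p) ∧ x = s.sup id := by
  refine ⟨?_, Or.inr⟩
  rintro (rfl | h)
  · exact ⟨∅, by simp, by simp⟩
  · exact h

theorem FinElt.of_isAtom {p : L} (hp : IsAtom p) : FinElt p :=
  finElt_iff.2 ⟨{p}, by simpa using hp, by simp⟩

theorem FinElt.sup {x y : L} (hx : FinElt x) (hy : FinElt y) : FinElt (x ⊔ y) := by
  classical
  obtain ⟨s, hs, rfl⟩ := finElt_iff.1 hx
  obtain ⟨t, ht, rfl⟩ := finElt_iff.1 hy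
  exact finElt_iff.2 ⟨s ∪ t, forall_mem_union.2 ⟨hs, ht⟩, sup_union.symm⟩

theorem exists_atom_le_not_le (hat : AtomsDetermineLE L) {x y : L} (h : ¬ y ≤ x) :
    ∃ p, IsAtom p ∧ p ≤ y ∧ ¬ p ≤ x := by
  by_contra! hc
  exact h (hat y x hc)

theorem sup_eq_sup_of_le_sup_atom (hcov : FiniteCoveringProperty L) {x p q : L}
    (hx : FinElt x) (hq : IsAtom q) (hpx : ¬ p ≤ x) (hpq : p ≤ x ⊔ q) : x ⊔ p = x ⊔ q := by
  have hqx : ¬ q ≤ x := fun h => hpx (hpq.trans (sup_le le_rfl h))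
  refine ((hcov x q hx hq hqx).eq_or_eq le_sup_left (sup_le le_sup_left hpq)).resolve_left ?_
  exact fun h => hpx (sup_eq_left.1 h)

theorem exists_mem_sup_sup_erase_eq [DecidableEq L] (hcov : FiniteCoveringProperty L)
    {x p : L} {s : Finset L} (hx : FinElt x) (hs : ∀ q ∈ s, IsAtom q) (hpx : ¬ p ≤ x)
    (hps : p ≤ x ⊔ s.sup id) : ∃ q ∈ s, x ⊔ p ⊔ (s.erase q).sup id = x ⊔ s.sup id := by
  induction s using Finset.induction_on with
  | empty => simp_all
  | @insert q t hqt ih =>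
    rw [forall_mem_insert] at hs
    by_cases hpt : p ≤ x ⊔ t.sup id
    · obtain ⟨r, hrt, hr⟩ := ih hs.2 hpt
      refine ⟨r, mem_insert_of_mem hrt, ?_⟩
      rw [erase_insert_of_ne (ne_of_mem_of_not_mem hrt hqt).symm, sup_insert, sup_insert]
      calc x ⊔ p ⊔ (id q ⊔ (t.erase r).sup id) = (x ⊔ p ⊔ (t.erase r).sup id) ⊔ q := by ac_rfl
        _ = x ⊔ (id q ⊔ t.sup id) := by rw [hr]; ac_rfl
    · refine ⟨q, mem_insert_self q t, ?_⟩
      have hxt : FinElt (x ⊔ t.sup id) := hx.sup (finElt_iff.2 ⟨t, hs.2, rfl⟩)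
      have hex := sup_eq_sup_of_le_sup_atom hcov hxt hs.1 hpt
        (by rw [sup_insert] at hps; exact hps.trans_eq (by ac_rfl))
      rw [erase_insert hqt, sup_insert, sup_right_comm, hex]
      ac_rfl

theorem exists_sup_eq_of_le_sup (hat : AtomsDetermineLE L) (hcov : FiniteCoveringProperty L)
    {x y : L} {s : Finset L} (hx : FinElt x) (hxy : x ≤ y) (hs : ∀ q ∈ s, IsAtom q)
    (hys : y ≤ x ⊔ s.sup id) :
    ∃ t : Finset L, (∀ q ∈ t, IsAtom q) ∧ y = x ⊔ t.sup id ∧ #t ≤ #s ∧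
      (y < x ⊔ s.sup id → #t < #s) := by
  classical
  induction s using Finset.strongInduction generalizing x with
  | H s ih =>
  by_cases hyx : y ≤ x
  · obtain rfl := le_antisymm hyx hxy
    refine ⟨∅, by simp, by simp, by simp, fun hlt => card_pos.2 ?_⟩
    exact nonempty_iff_ne_empty.2 fun hs => by simp [hs] at hlt
  obtain ⟨p, hp, hpy, hpx⟩ := exists_atom_le_not_le hat hyx
  obtain ⟨q, hqs, hq⟩ := exists_mem_sup_sup_erase_eq hcov hx hs hpx (hpy.trans hys)
  obtain ⟨t, ht, hyt, hcard, hlt⟩ := ih _ (erase_ssubset hqs) (hx.sup (.of_isAtom hp))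
    (sup_le hxy hpy) (fun r hr => hs r (mem_of_mem_erase hr)) (hq ▸ hys)
  have hcard_erase : #(s.erase q) + 1 = #s := card_erase_add_one hqs
  have hcard_insert : #(insert p t) ≤ #t + 1 := card_insert_le p t
  refine ⟨insert p t, (forall_mem_insert p t _).2 ⟨hp, ht⟩, ?_, by omega, fun hys' => ?_⟩
  · rw [sup_insert, hyt]; ac_rfl
  · have := hlt (hq ▸ hys'); omega

theorem FinElt.of_le (hat : AtomsDetermineLE L) (hcov : FiniteCoveringProperty L) {x y : L}
    (hy : FinElt y) (hxy : x ≤ y) : FinElt x := by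
  obtain ⟨s, hs, rfl⟩ := finElt_iff.1 hy
  obtain ⟨t, ht, hxt, -⟩ :=
    exists_sup_eq_of_le_sup hat hcov (x := ⊥) (y := x) (.inl rfl) bot_le hs (by rwa [bot_sup_eq])
  exact finElt_iff.2 ⟨t, ht, by rwa [bot_sup_eq] at hxt⟩

-- Elements that are not finite get the junk rank `sInf ∅ = 0`.
noncomputable def atomRank (x : L) : ℕ :=
  sInf {n | ∃ s : Finset L, (∀ p ∈ s, IsAtom p) ∧ #s = n ∧ x = s.sup id}

theorem atomRank_le_card {x : L} {s : Finset L} (hs : ∀ p ∈ s, IsAtom p) (hx : x = s.sup id) :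
    atomRank x ≤ #s :=
  Nat.sInf_le ⟨s, hs, rfl, hx⟩

theorem FinElt.exists_card_eq_atomRank {x : L} (hx : FinElt x) :
    ∃ s : Finset L, (∀ p ∈ s, IsAtom p) ∧ #s = atomRank x ∧ x = s.sup id := by
  obtain ⟨s, hs, hx⟩ := finElt_iff.1 hx
  exact Nat.sInf_mem (s := {n | ∃ t : Finset L, (∀ p ∈ t, IsAtom p) ∧ #t = n ∧ x = t.sup id})
    ⟨#s, s, hs, rfl, hx⟩

theorem atomRank_bot : atomRank (⊥ : L) = 0 :=
  Nat.le_zero.1 (atomRank_le_card (s := ∅) (by simp) (by simp))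

theorem atomRank_lt_of_lt (hat : AtomsDetermineLE L) (hcov : FiniteCoveringProperty L)
    {x y : L} (hy : FinElt y) (hxy : x < y) : atomRank x < atomRank y := by
  obtain ⟨s, hs, hcard, rfl⟩ := hy.exists_card_eq_atomRank
  obtain ⟨t, ht, hxt, -, hlt⟩ :=
    exists_sup_eq_of_le_sup hat hcov (x := ⊥) (y := x) (.inl rfl) bot_le hs
      (by rw [bot_sup_eq]; exact hxy.le)
  rw [bot_sup_eq] at hxt hlt
  calc atomRank x ≤ #t := atomRank_le_card ht hxt
    _ < #s := hlt hxy
    _ = _ := hcard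

theorem eq_of_le_of_atomRank_le (hat : AtomsDetermineLE L) (hcov : FiniteCoveringProperty L)
    {x y : L} (hy : FinElt y) (hxy : x ≤ y) (h : atomRank y ≤ atomRank x) : x = y :=
  hxy.eq_or_lt.resolve_right fun hlt => (atomRank_lt_of_lt hat hcov hy hlt).not_ge h

theorem atomRank_sup_le {x y : L} (hx : FinElt x) (hy : FinElt y) :
    atomRank (x ⊔ y) ≤ atomRank x + atomRank y := by
  classical
  obtain ⟨s, hs, hsx, rfl⟩ := hx.exists_card_eq_atomRank
  obtain ⟨t, ht, hty, rfl⟩ := hy.exists_card_eq_atomRank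
  calc atomRank (s.sup id ⊔ t.sup id) ≤ #(s ∪ t) :=
        atomRank_le_card (forall_mem_union.2 ⟨hs, ht⟩) sup_union.symm
    _ ≤ #s + #t := card_union_le s t
    _ = _ := by rw [hsx, hty]

theorem atomRank_sup_atom (hat : AtomsDetermineLE L) (hcov : FiniteCoveringProperty L)
    {x p : L} (hx : FinElt x) (hp : IsAtom p) (hpx : ¬ p ≤ x) :
    atomRank (x ⊔ p) = atomRank x + 1 := by
  have hle := atomRank_sup_le hx (.of_isAtom hp)
  have hp1 : atomRank p ≤ 1 := atomRank_le_card (s := {p}) (by simpa) (by simp)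
  have hlt := atomRank_lt_of_lt hat hcov (hx.sup (.of_isAtom hp)) (left_lt_sup.2 hpx)
  omega

theorem exists_sup_eq_of_le (hat : AtomsDetermineLE L) (hcov : FiniteCoveringProperty L)
    {x y : L} (hy : FinElt y) (hxy : x ≤ y) :
    ∃ u : Finset L, (∀ p ∈ u, IsAtom p) ∧ y = x ⊔ u.sup id ∧ atomRank x + #u ≤ atomRank y := by
  classical
  obtain ⟨n, hn⟩ : ∃ n, atomRank y ≤ atomRank x + n := ⟨atomRank y, by omega⟩
  induction n generalizing x with
  | zero =>
    obtain rfl := eq_of_le_of_atomRank_le hat hcov hy hxy (by omega)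
    exact ⟨∅, by simp, by simp, by simp⟩
  | succ n ih =>
    by_cases hyx : y ≤ x
    · obtain rfl := le_antisymm hxy hyx
      exact ⟨∅, by simp, by simp, by simp⟩
    obtain ⟨p, hp, hpy, hpx⟩ := exists_atom_le_not_le hat hyx
    have hxp := atomRank_sup_atom hat hcov (hy.of_le hat hcov hxy) hp hpx
    obtain ⟨u, hu, hyu, hcard⟩ := ih (sup_le hxy hpy) (by omega)
    refine ⟨insert p u, (forall_mem_insert p u _).2 ⟨hp, hu⟩, ?_, ?_⟩
    · rw [sup_insert, hyu]; ac_rfl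
    · have := card_insert_le p u; omega

theorem atomRank_sup_add_atomRank_inf_le (hat : AtomsDetermineLE L)
    (hcov : FiniteCoveringProperty L) {x y : L} (hx : FinElt x) (hy : FinElt y) :
    atomRank (x ⊔ y) + atomRank (x ⊓ y) ≤ atomRank x + atomRank y := by
  obtain ⟨u, hu, hxu, hcard⟩ := exists_sup_eq_of_le hat hcov hx (inf_le_left : x ⊓ y ≤ x)
  have hsup : x ⊔ y = y ⊔ u.sup id := by
    rw [hxu, sup_right_comm, sup_eq_right.2 (inf_le_right : x ⊓ y ≤ y)]
  have hu_le : atomRank (u.sup id) ≤ #u := atomRank_le_card hu rfl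
  have := atomRank_sup_le hy (finElt_iff.2 ⟨u, hu, rfl⟩)
  rw [hsup]
  omega

section Orthocomplement

variable {oc : L → L}

theorem oc_bot (hanti : Antitone oc) (hinv : Involutive oc) : oc ⊥ = ⊤ :=
  top_le_iff.1 (hinv ⊤ ▸ hanti bot_le)

theorem IsAtom.not_le_oc (hbot : ∀ a : L, a ⊓ oc a = ⊥) {p : L} (hp : IsAtom p) : ¬ p ≤ oc p :=
  fun h => hp.1 (le_bot_iff.1 (hbot p ▸ le_inf le_rfl h))

theorem sup_inf_oc_atom_eq_of_exchange (hat : AtomsDetermineLE L)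
    (hexch : ∀ p q : L, IsAtom p → IsAtom q → p ≠ q → ∃ r ≤ oc p, p ⊔ q = p ⊔ r)
    {p x : L} (hp : IsAtom p) (hpx : p ≤ x) : p ⊔ (x ⊓ oc p) = x := by
  refine le_antisymm (sup_le hpx inf_le_left) (hat _ _ fun q hq hqx => ?_)
  obtain rfl | hpq := eq_or_ne p q
  · exact le_sup_left
  obtain ⟨r, hrp, hpqr⟩ := hexch p q hp hq hpq
  have hrx : r ≤ x := le_sup_right.trans (hpqr ▸ sup_le hpx hqx)
  calc q ≤ p ⊔ r := hpqr ▸ le_sup_right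
    _ ≤ p ⊔ (x ⊓ oc p) := sup_le_sup_left (le_inf hrx hrp) p

structure IsAtomicOrthocomplement (oc : L → L) : Prop where
  antitone : Antitone oc
  involutive : Involutive oc
  inf_self : ∀ a, a ⊓ oc a = ⊥
  sup_inf_atom : ∀ p x : L, IsAtom p → p ≤ x → p ⊔ (x ⊓ oc p) = x

end Orthocomplement

namespace IsAtomicOrthocomplement

variable {oc : L → L}

theorem atomRank_inf_oc_add_one (hat : AtomsDetermineLE L) (hcov : FiniteCoveringProperty L)
    (hoc : IsAtomicOrthocomplement oc) {p z : L} (hz : FinElt z) (hp : IsAtom p) (hpz : p ≤ z) :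
    atomRank (z ⊓ oc p) + 1 = atomRank z := by
  conv_rhs => rw [← hoc.sup_inf_atom p z hp hpz, sup_comm]
  exact (atomRank_sup_atom hat hcov (hz.of_le hat hcov inf_le_left) hp
    fun h => hp.not_le_oc hoc.inf_self (h.trans inf_le_right)).symm

theorem sup_inf_oc_eq (hat : AtomsDetermineLE L) (hcov : FiniteCoveringProperty L)
    (hoc : IsAtomicOrthocomplement oc) {a x : L} (ha : FinElt a) (hax : a ≤ x) :
    a ⊔ (x ⊓ oc a) = x := by
  induction hn : atomRank a using Nat.strong_induction_on generalizing a with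
  | _ n ih =>
  by_cases ha0 : a = ⊥
  · rw [ha0, oc_bot hoc.antitone hoc.involutive, inf_top_eq, bot_sup_eq]
  obtain ⟨p, hp, hpa, -⟩ := exists_atom_le_not_le hat (mt le_bot_iff.1 ha0)
  have hrank := hoc.atomRank_inf_oc_add_one hat hcov ha hp hpa
  set a' := a ⊓ oc p
  have ih' : a' ⊔ (x ⊓ oc a') = x :=
    ih _ (by omega) (ha.of_le hat hcov inf_le_left) (inf_le_left.trans hax) rfl
  have hpx : p ≤ x ⊓ oc a' :=
    le_inf (hpa.trans hax) (le_oc_comm hoc.antitone hoc.involutive inf_le_right)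
  have hoc_a : oc a = oc a' ⊓ oc p := by
    rw [← oc_sup hoc.antitone hoc.involutive, sup_comm, hoc.sup_inf_atom p a hp hpa]
  calc a ⊔ (x ⊓ oc a) = a' ⊔ (p ⊔ (x ⊓ oc a' ⊓ oc p)) := by
        rw [hoc_a, ← inf_assoc, ← sup_assoc, sup_comm a', hoc.sup_inf_atom p a hp hpa]
    _ = x := by rw [hoc.sup_inf_atom p _ hp hpx, ih']

theorem atomRank_sup_of_le_oc (hat : AtomsDetermineLE L) (hcov : FiniteCoveringProperty L)
    (hoc : IsAtomicOrthocomplement oc) {x y : L} (hx : FinElt x) (hy : FinElt y)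
    (hyx : y ≤ oc x) : atomRank (x ⊔ y) = atomRank x + atomRank y := by
  refine le_antisymm (atomRank_sup_le hx hy) ?_
  induction hn : atomRank y using Nat.strong_induction_on generalizing y with
  | _ n ih =>
  by_cases hy0 : y = ⊥
  · rw [← hn, hy0, atomRank_bot, sup_bot_eq, add_zero]
  obtain ⟨p, hp, hpy, -⟩ := exists_atom_le_not_le hat (mt le_bot_iff.1 hy0)
  have hrank := hoc.atomRank_inf_oc_add_one hat hcov hy hp hpy
  have hy' : FinElt (y ⊓ oc p) := hy.of_le hat hcov inf_le_left
  have ih' := ih _ (by omega) hy' (inf_le_left.trans hyx) rfl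
  have hp_oc : p ≤ oc (x ⊔ y ⊓ oc p) := by
    rw [oc_sup hoc.antitone hoc.involutive]
    exact le_inf (hpy.trans hyx) (le_oc_comm hoc.antitone hoc.involutive inf_le_right)
  have hsup := atomRank_sup_atom hat hcov (hx.sup hy') hp
    fun h => hp.not_le_oc hoc.inf_self (hp_oc.trans (hoc.antitone h))
  rw [sup_assoc, sup_comm (y ⊓ oc p), hoc.sup_inf_atom p y hp hpy] at hsup
  omega

theorem atomRank_add_atomRank_inf_oc (hat : AtomsDetermineLE L)
    (hcov : FiniteCoveringProperty L) (hoc : IsAtomicOrthocomplement oc) {b z : L}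
    (hb : FinElt b) (hzb : z ≤ b) : atomRank z + atomRank (b ⊓ oc z) = atomRank b := by
  have hz := hb.of_le hat hcov hzb
  conv_rhs => rw [← hoc.sup_inf_oc_eq hat hcov hz hzb]
  exact (hoc.atomRank_sup_of_le_oc hat hcov hz (hb.of_le hat hcov inf_le_left) inf_le_right).symm

theorem inf_oc_sup_eq (hat : AtomsDetermineLE L) (hcov : FiniteCoveringProperty L)
    (hoc : IsAtomicOrthocomplement oc) {a b : L} (hb : FinElt b) (hab : a ≤ b) :
    b ⊓ (oc b ⊔ a) = a := by
  have hm : b ⊓ (oc b ⊔ a) ⊓ oc a = ⊥ := by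
    refine le_bot_iff.1 (le_of_le_of_eq ?_ (hoc.inf_self (b ⊓ oc a)))
    rw [oc_inf hoc.antitone hoc.involutive, hoc.involutive]
    exact le_inf (inf_le_inf_right _ inf_le_left) (inf_le_left.trans inf_le_right)
  calc b ⊓ (oc b ⊔ a) = a ⊔ (b ⊓ (oc b ⊔ a) ⊓ oc a) :=
        (hoc.sup_inf_oc_eq hat hcov (hb.of_le hat hcov hab) (le_inf hab le_sup_right)).symm
    _ = a := by rw [hm, sup_bot_eq]

theorem inf_oc_inf_eq_sup (hat : AtomsDetermineLE L) (hcov : FiniteCoveringProperty L)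
    (hoc : IsAtomicOrthocomplement oc) {b x y : L} (hb : FinElt b) (hxb : x ≤ b) (hyb : y ≤ b) :
    b ⊓ oc (x ⊓ y) = b ⊓ oc x ⊔ b ⊓ oc y := by
  have hanti := hoc.antitone
  have hinv := hoc.involutive
  have hx_y : b ⊓ oc (b ⊓ oc x ⊔ b ⊓ oc y) = x ⊓ y := by
    rw [oc_sup hanti hinv, oc_inf hanti hinv, oc_inf hanti hinv, hinv, hinv,
      inf_inf_distrib_left, hoc.inf_oc_sup_eq hat hcov hb hxb, hoc.inf_oc_sup_eq hat hcov hb hyb]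
  rw [← hx_y, oc_inf hanti hinv, hinv,
    hoc.inf_oc_sup_eq hat hcov hb (sup_le inf_le_left inf_le_left)]

theorem atomRank_inf_add_atomRank_sup (hat : AtomsDetermineLE L)
    (hcov : FiniteCoveringProperty L) (hoc : IsAtomicOrthocomplement oc) {x y : L}
    (hx : FinElt x) (hy : FinElt y) :
    atomRank (x ⊓ y) + atomRank (x ⊔ y) = atomRank x + atomRank y := by
  have hb : FinElt (x ⊔ y) := hx.sup hy
  have hxb : x ≤ x ⊔ y := le_sup_left
  have hyb : y ≤ x ⊔ y := le_sup_right
  have hsub := atomRank_sup_add_atomRank_inf_le hat hcov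
    (hb.of_le hat hcov (inf_le_left : (x ⊔ y) ⊓ oc x ≤ _))
    (hb.of_le hat hcov (inf_le_left : (x ⊔ y) ⊓ oc y ≤ _))
  rw [← hoc.inf_oc_inf_eq_sup hat hcov hb hxb hyb, inf_inf_inf_comm, inf_idem,
    ← oc_sup hoc.antitone hoc.involutive] at hsub
  have hcx := hoc.atomRank_add_atomRank_inf_oc hat hcov hb hxb
  have hcy := hoc.atomRank_add_atomRank_inf_oc hat hcov hb hyb
  have hci := hoc.atomRank_add_atomRank_inf_oc hat hcov hb (inf_le_sup : x ⊓ y ≤ _)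
  have hcs := hoc.atomRank_add_atomRank_inf_oc hat hcov hb le_rfl
  have := atomRank_sup_add_atomRank_inf_le hat hcov hx hy
  omega

theorem sup_inf_eq_of_le (hat : AtomsDetermineLE L) (hcov : FiniteCoveringProperty L)
    (hoc : IsAtomicOrthocomplement oc) {a b c : L} (ha : FinElt a) (hb : FinElt b)
    (hc : FinElt c) (hcb : c ≤ b) : (c ⊔ a) ⊓ b = c ⊔ a ⊓ b := by
  have hab : FinElt (a ⊓ b) := ha.of_le hat hcov inf_le_left
  refine (eq_of_le_of_atomRank_le hat hcov ((hc.sup ha).of_le hat hcov inf_le_left)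
    (sup_le (le_inf le_sup_left hcb) (inf_le_inf_right b le_sup_right)) ?_).symm
  have h₁ := hoc.atomRank_inf_add_atomRank_sup hat hcov (hc.sup ha) hb
  have h₂ := hoc.atomRank_inf_add_atomRank_sup hat hcov hc ha
  have h₃ := hoc.atomRank_inf_add_atomRank_sup hat hcov hc hab
  have h₄ := hoc.atomRank_inf_add_atomRank_sup hat hcov ha hb
  rw [sup_assoc, sup_eq_right.2 (hcb.trans le_sup_right)] at h₁
  rw [← inf_assoc, inf_eq_left.2 (inf_le_left.trans hcb)] at h₃
  omega

end IsAtomicOrthocomplement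

end

theorem stmt_8_general {L : Type*} [Lattice L] [BoundedOrder L] (oc : L → L)
    (hanti : ∀ a b : L, a ≤ b → oc b ≤ oc a)
    (hinv : ∀ a : L, oc (oc a) = a)
    (hbot : ∀ a : L, a ⊓ oc a = ⊥)
    (hatomistic : ∀ a b : L, (∀ p : L, IsAtom p → p ≤ a → p ≤ b) → a ≤ b)
    (h1 : ∀ a p : L, FinElt a → IsAtom p → ¬ p ≤ a → a ⋖ a ⊔ p)
    (h2 : ∀ p q : L, IsAtom p → IsAtom q → p ≠ q →
      ∃ r : L, IsAtom r ∧ r ≤ oc p ∧ p ⊔ q = p ⊔ r) :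
    (∀ a b : L, FinElt a → FinElt b → FinElt (a ⊓ b) ∧ FinElt (a ⊔ b)) ∧
    (∀ a b c : L, FinElt a → FinElt b → FinElt c → c ≤ b →
      (c ⊔ a) ⊓ b = c ⊔ (a ⊓ b)) := by
  have hoc : IsAtomicOrthocomplement oc :=
    { antitone := fun a b => hanti a b
      involutive := hinv
      inf_self := hbot
      sup_inf_atom := fun _ _ hp hpx => sup_inf_oc_atom_eq_of_exchange hatomistic
        (fun p q hp hq hpq => (h2 p q hp hq hpq).imp fun _ => And.right) hp hpx }
  exact ⟨fun a b ha hb => ⟨ha.of_le hatomistic h1 inf_le_left, ha.sup hb⟩,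
    fun a b c ha hb hc hcb => hoc.sup_inf_eq_of_le hatomistic h1 ha hb hc hcb⟩

theorem stmt_8 {L : Type*} [Lattice L] [BoundedOrder L] (oc : L → L)
    (hanti : ∀ a b : L, a ≤ b → oc b ≤ oc a)
    (hinv : ∀ a : L, oc (oc a) = a)
    (hbot : ∀ a : L, a ⊓ oc a = ⊥)
    (htop : ∀ a : L, a ⊔ oc a = ⊤)
    (hatomistic : ∀ a b : L, (∀ p : L, IsAtom p → p ≤ a → p ≤ b) → a ≤ b)
    (h1 : ∀ a p : L, FinElt a → IsAtom p → ¬ p ≤ a → a ⋖ a ⊔ p)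
    (h2 : ∀ p q : L, IsAtom p → IsAtom q → p ≠ q →
      ∃ r : L, IsAtom r ∧ r ≤ oc p ∧ p ⊔ q = p ⊔ r) :
    (∀ a b : L, FinElt a → FinElt b → FinElt (a ⊓ b) ∧ FinElt (a ⊔ b)) ∧
    (∀ a b c : L, FinElt a → FinElt b → FinElt c → c ≤ b →
      (c ⊔ a) ⊓ b = c ⊔ (a ⊓ b)) :=
  stmt_8_general oc hanti hinv hbot hatomistic h1 h2
end

section
/- Let L be a complete atomistic ortholattice and define, on the set A(L) of atoms of L, p ⊥ q iff p ≤ qᶜ. Then (A(L),⊥) is a point-closed orthoset, and the map ω sending a ∈ L to {p ∈ A(L) : p ≤ a} is an order isomorphism from L onto the collection of orthoclosed subsets of A(L) ordered by inclusion, satisfying ω(aᶜ) = ω(a)^⊥ for all a ∈ L. Conversely, if (X,⊥) is a point-closed orthoset, then the orthoclosed subsets of X, ordered by inclusion and with the operation A ↦ A^⊥, form a complete atomistic ortholattice whose atoms are exactly the singletons {e}, e ∈ X. -/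
/-!
Both directions rest on the antitone Galois connection `A ↦ A^⊥` of a symmetric relation.
In an atomistic ortholattice every element is the join of the atoms below it, so the atoms
orthogonal to all of a set `S` of atoms are exactly the atoms below `(⨆ S)ᶜ`; hence `ω` turns
`ᶜ` into `^⊥`, every orthoclosed set is `ω` of the join of its atoms, and `ω` reflects order.
In an orthoset, `A^⊥⊥⊥ = A^⊥` and irreflexivity give the orthocomplement laws, and
point-closedness makes the singletons the minimal nonempty orthoclosed sets.
-/

/-- The orthocomplement of a subset of an orthoset. -/
def pperp {X : Type*} (perp : X → X → Prop) (A : Set X) : Set X :=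
  {q | ∀ p ∈ A, perp q p}

namespace Orthoset

variable {X : Type*} {perp : X → X → Prop}

def IsOrthoclosed (perp : X → X → Prop) (A : Set X) : Prop :=
  pperp perp (pperp perp A) = A

theorem pperp_anti {A B : Set X} (h : A ⊆ B) : pperp perp B ⊆ pperp perp A :=
  fun _ hq p hp => hq p (h hp)

theorem pperp_empty : pperp perp (∅ : Set X) = Set.univ := by
  ext q
  simp [pperp]

theorem pperp_univ (hirr : ∀ x, ¬ perp x x) : pperp perp (Set.univ : Set X) = ∅ :=
  Set.eq_empty_iff_forall_notMem.mpr fun q hq => hirr q (hq q trivial)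

theorem inter_pperp_eq_empty (hirr : ∀ x, ¬ perp x x) (A : Set X) :
    A ∩ pperp perp A = ∅ :=
  Set.eq_empty_iff_forall_notMem.mpr fun q ⟨hqA, hq⟩ => hirr q (hq q hqA)

section Symmetric

variable (hsymm : ∀ x y, perp x y → perp y x)
include hsymm

theorem subset_pperp_pperp (A : Set X) : A ⊆ pperp perp (pperp perp A) :=
  fun p hp _ hq => hsymm _ _ (hq p hp)

theorem isOrthoclosed_pperp (A : Set X) : IsOrthoclosed perp (pperp perp A) :=
  subset_antisymm (pperp_anti (subset_pperp_pperp hsymm A)) (subset_pperp_pperp hsymm _)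

theorem isOrthoclosed_sInter {𝒜 : Set (Set X)} (h𝒜 : ∀ A ∈ 𝒜, IsOrthoclosed perp A) :
    IsOrthoclosed perp (⋂₀ 𝒜) := by
  refine subset_antisymm (fun x hx => Set.mem_sInter.mpr fun A hA => ?_)
    (subset_pperp_pperp hsymm _)
  rw [← h𝒜 A hA]
  exact pperp_anti (pperp_anti (Set.sInter_subset_of_mem hA)) hx

end Symmetric

theorem isOrthoclosed_empty (hirr : ∀ x, ¬ perp x x) : IsOrthoclosed perp (∅ : Set X) := by
  rw [IsOrthoclosed, pperp_empty, pperp_univ hirr]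

theorem isOrthoclosed_univ (hirr : ∀ x, ¬ perp x x) :
    IsOrthoclosed perp (Set.univ : Set X) := by
  rw [IsOrthoclosed, pperp_univ hirr, pperp_empty]

theorem pperp_pperp_union_pperp (hirr : ∀ x, ¬ perp x x) (A : Set X) :
    pperp perp (pperp perp (A ∪ pperp perp A)) = Set.univ := by
  have hempty : pperp perp (A ∪ pperp perp A) = ∅ :=
    Set.eq_empty_iff_forall_notMem.mpr fun q hq =>
      hirr q (hq q (Or.inr fun p hp => hq p (Or.inl hp)))
  rw [hempty, pperp_empty]

theorem minimal_nonempty_isOrthoclosed_iff (hpc : ∀ e : X, IsOrthoclosed perp {e})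
    (A : Set X) :
    (A ≠ ∅ ∧ ∀ B, IsOrthoclosed perp B → B ⊆ A → B = ∅ ∨ B = A) ↔ ∃ e, A = {e} := by
  constructor
  · rintro ⟨hne, hmin⟩
    obtain ⟨e, he⟩ := Set.nonempty_iff_ne_empty.mpr hne
    rcases hmin {e} (hpc e) (Set.singleton_subset_iff.mpr he) with h | h
    · exact absurd h (Set.singleton_ne_empty e)
    · exact ⟨e, h.symm⟩
  · rintro ⟨e, rfl⟩
    exact ⟨Set.singleton_ne_empty e, fun B _ hB => Set.subset_singleton_iff_eq.mp hB⟩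

end Orthoset

namespace Ortholattice

open Orthoset

variable {L : Type*} [CompleteLattice L] {oc : L → L}

abbrev Atom (L : Type*) [CompleteLattice L] : Type _ := {p : L // IsAtom p}

def atomPerp (oc : L → L) (p q : Atom L) : Prop := p.1 ≤ oc q.1

def atomsBelow (a : L) : Set (Atom L) := {p | p.1 ≤ a}

theorem atomsBelow_atom (p : Atom L) : atomsBelow p.1 = {p} := by
  ext q
  refine ⟨fun hqp => Subtype.ext ?_, fun hqp => hqp ▸ le_rfl⟩
  exact (p.2.le_iff.mp hqp).resolve_left q.2.1

theorem atomPerp_irrefl (hbot : ∀ a : L, a ⊓ oc a = ⊥) (p : Atom L) : ¬ atomPerp oc p p :=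
  fun h => p.2.1 (by rw [← inf_eq_left.mpr h, hbot])

theorem image_val_atomsBelow (a : L) :
    Subtype.val '' atomsBelow a = {p : L | IsAtom p ∧ p ≤ a} := by
  ext p
  simp [atomsBelow, and_comm]

theorem atomsBelow_subset_iff (hatomistic : ∀ a : L, a = sSup {p : L | IsAtom p ∧ p ≤ a})
    {a b : L} : atomsBelow a ⊆ atomsBelow b ↔ a ≤ b := by
  refine ⟨fun h => ?_, fun hab _ hp => le_trans hp hab⟩
  rw [hatomistic a, ← image_val_atomsBelow]
  exact sSup_le fun _ ⟨p, hp, hpv⟩ => hpv ▸ h hp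

section Orthocomplement

variable (hanti : ∀ a b : L, a ≤ b → oc b ≤ oc a) (hinv : ∀ a : L, oc (oc a) = a)
include hanti hinv

theorem le_oc_comm {a b : L} (h : a ≤ oc b) : b ≤ oc a :=
  hinv b ▸ hanti _ _ h

theorem atomPerp_symm {p q : Atom L} (h : atomPerp oc p q) : atomPerp oc q p :=
  le_oc_comm hanti hinv h

theorem pperp_atomPerp (S : Set (Atom L)) :
    pperp (atomPerp oc) S = atomsBelow (oc (sSup (Subtype.val '' S))) := by
  ext q
  refine ⟨fun hq => le_oc_comm hanti hinv (sSup_le ?_), fun hq p hp => ?_⟩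
  · rintro _ ⟨p, hp, rfl⟩
    exact le_oc_comm hanti hinv (hq p hp)
  · exact le_trans hq (hanti _ _ (le_sSup ⟨p, hp, rfl⟩))

variable (hatomistic : ∀ a : L, a = sSup {p : L | IsAtom p ∧ p ≤ a})
include hatomistic

theorem pperp_atomsBelow (a : L) :
    pperp (atomPerp oc) (atomsBelow a) = atomsBelow (oc a) := by
  rw [pperp_atomPerp hanti hinv, image_val_atomsBelow, ← hatomistic]

theorem isOrthoclosed_atomsBelow (a : L) : IsOrthoclosed (atomPerp oc) (atomsBelow a) := by
  rw [IsOrthoclosed, pperp_atomsBelow hanti hinv hatomistic,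
    pperp_atomsBelow hanti hinv hatomistic, hinv]

theorem exists_atomsBelow_eq {S : Set (Atom L)} (hS : IsOrthoclosed (atomPerp oc) S) :
    ∃ a, atomsBelow a = S := by
  refine ⟨sSup (Subtype.val '' S), ?_⟩
  rw [← hinv (sSup _), ← pperp_atomsBelow hanti hinv hatomistic,
    ← pperp_atomPerp hanti hinv S]
  exact hS

end Orthocomplement

end Ortholattice

open Orthoset Ortholattice in
theorem stmt_9_general
    -- Part 1 data: a complete atomistic ortholattice L
    {L : Type*} [CompleteLattice L] (oc : L → L)
    (hanti : ∀ a b : L, a ≤ b → oc b ≤ oc a)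
    (hinv : ∀ a : L, oc (oc a) = a)
    (hbot : ∀ a : L, a ⊓ oc a = ⊥)
    (hatomistic : ∀ a : L, a = sSup {p : L | IsAtom p ∧ p ≤ a})
    -- Part 2 data: a point-closed orthoset (X, perp)
    {X : Type*} (perp : X → X → Prop)
    (hsymm : ∀ x y : X, perp x y → perp y x)
    (hirr : ∀ x : X, ¬ perp x x)
    (hpc : ∀ e : X, pperp perp (pperp perp {e}) = {e}) :
    -- Part 1: the atom space of L is a point-closed orthoset and ω is an
    -- isomorphism onto the ortholattice of orthoclosed subsets of A(L).
    (let A := {p : L // IsAtom p}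
     let perpA : A → A → Prop := fun p q => p.1 ≤ oc q.1
     let ω : L → Set A := fun a => {p : A | p.1 ≤ a}
     (∀ p q : A, perpA p q → perpA q p) ∧
     (∀ p : A, ¬ perpA p p) ∧
     (∀ p : A, pperp perpA (pperp perpA {p}) = {p}) ∧
     (∀ a b : L, a ≤ b ↔ ω a ⊆ ω b) ∧
     (∀ a : L, pperp perpA (pperp perpA (ω a)) = ω a) ∧
     (∀ A' : Set A, pperp perpA (pperp perpA A') = A' → ∃ a : L, ω a = A') ∧
     (∀ a : L, ω (oc a) = pperp perpA (ω a))) ∧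
    -- Part 2: the orthoclosed subsets of X form a complete atomistic
    -- ortholattice whose atoms are the singletons.
    (let OC : Set X → Prop := fun A => pperp perp (pperp perp A) = A
     OC ∅ ∧ OC Set.univ ∧
     (∀ 𝒜 : Set (Set X), (∀ A ∈ 𝒜, OC A) → OC (⋂₀ 𝒜)) ∧
     (∀ A : Set X, OC A → OC (pperp perp A)) ∧
     (∀ A : Set X, OC A → A ∩ pperp perp A = ∅) ∧
     (∀ A : Set X, OC A →
       pperp perp (pperp perp (A ∪ pperp perp A)) = Set.univ) ∧
     (∀ A B : Set X, A ⊆ B → pperp perp B ⊆ pperp perp A) ∧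
     (∀ A : Set X, OC A →
       pperp perp (pperp perp (⋃ e ∈ A, ({e} : Set X))) = A) ∧
     (∀ A : Set X, OC A →
       ((A ≠ ∅ ∧ ∀ B : Set X, OC B → B ⊆ A → B = ∅ ∨ B = A) ↔
         ∃ e : X, A = {e}))) := by
  have hclosed := isOrthoclosed_atomsBelow hanti hinv hatomistic
  refine ⟨⟨fun _ _ => atomPerp_symm hanti hinv, atomPerp_irrefl hbot, fun p => ?_,
      fun _ _ => (atomsBelow_subset_iff hatomistic).symm, hclosed,
      fun _ => exists_atomsBelow_eq hanti hinv hatomistic,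
      fun a => (pperp_atomsBelow hanti hinv hatomistic a).symm⟩,
    isOrthoclosed_empty hirr, isOrthoclosed_univ hirr,
    fun _ => isOrthoclosed_sInter hsymm,
    fun A _ => isOrthoclosed_pperp hsymm A,
    fun A _ => inter_pperp_eq_empty hirr A,
    fun A _ => pperp_pperp_union_pperp hirr A,
    fun _ _ => pperp_anti,
    fun A hA => by rwa [Set.biUnion_of_singleton],
    fun A _ => minimal_nonempty_isOrthoclosed_iff hpc A⟩
  rw [← atomsBelow_atom p]
  exact hclosed p.1

theorem stmt_9
    -- Part 1 data: a complete atomistic ortholattice L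
    {L : Type*} [CompleteLattice L] (oc : L → L)
    (hanti : ∀ a b : L, a ≤ b → oc b ≤ oc a)
    (hinv : ∀ a : L, oc (oc a) = a)
    (hbot : ∀ a : L, a ⊓ oc a = ⊥)
    (htop : ∀ a : L, a ⊔ oc a = ⊤)
    (hatomistic : ∀ a : L, a = sSup {p : L | IsAtom p ∧ p ≤ a})
    -- Part 2 data: a point-closed orthoset (X, perp)
    {X : Type*} [Nonempty X] (perp : X → X → Prop)
    (hsymm : ∀ x y : X, perp x y → perp y x)
    (hirr : ∀ x : X, ¬ perp x x)
    (hpc : ∀ e : X, pperp perp (pperp perp {e}) = {e}) :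
    -- Part 1: the atom space of L is a point-closed orthoset and ω is an
    -- isomorphism onto the ortholattice of orthoclosed subsets of A(L).
    (let A := {p : L // IsAtom p}
     let perpA : A → A → Prop := fun p q => p.1 ≤ oc q.1
     let ω : L → Set A := fun a => {p : A | p.1 ≤ a}
     (∀ p q : A, perpA p q → perpA q p) ∧
     (∀ p : A, ¬ perpA p p) ∧
     (∀ p : A, pperp perpA (pperp perpA {p}) = {p}) ∧
     (∀ a b : L, a ≤ b ↔ ω a ⊆ ω b) ∧
     (∀ a : L, pperp perpA (pperp perpA (ω a)) = ω a) ∧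
     (∀ A' : Set A, pperp perpA (pperp perpA A') = A' → ∃ a : L, ω a = A') ∧
     (∀ a : L, ω (oc a) = pperp perpA (ω a))) ∧
    -- Part 2: the orthoclosed subsets of X form a complete atomistic
    -- ortholattice whose atoms are the singletons.
    (let OC : Set X → Prop := fun A => pperp perp (pperp perp A) = A
     OC ∅ ∧ OC Set.univ ∧
     (∀ 𝒜 : Set (Set X), (∀ A ∈ 𝒜, OC A) → OC (⋂₀ 𝒜)) ∧
     (∀ A : Set X, OC A → OC (pperp perp A)) ∧
     (∀ A : Set X, OC A → A ∩ pperp perp A = ∅) ∧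
     (∀ A : Set X, OC A →
       pperp perp (pperp perp (A ∪ pperp perp A)) = Set.univ) ∧
     (∀ A B : Set X, A ⊆ B → pperp perp B ⊆ pperp perp A) ∧
     (∀ A : Set X, OC A →
       pperp perp (pperp perp (⋃ e ∈ A, ({e} : Set X))) = A) ∧
     (∀ A : Set X, OC A →
       ((A ≠ ∅ ∧ ∀ B : Set X, OC B → B ⊆ A → B = ∅ ∨ B = A) ↔
         ∃ e : X, A = {e}))) :=
  stmt_9_general oc hanti hinv hbot hatomistic perp hsymm hirr hpc
end

section
/- Let (X,⊥) be a homogeneously transitive orthoset containing four mutually orthogonal elements and such that ⊥ does not coincide with ≠. Then: (L1) for any distinct e, f ∈ X there is ē ∈ X with ē ⊥ e and {e,f}^⊥⊥ = {e,ē}^⊥⊥; (L2) for any e, f ∈ X with e ⊥ f there is g ∈ {e,f}^⊥⊥ distinct from both e and f. -/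
/-- An automorphism of the orthoset `(X, perp)`. -/
def IsOrthoAuto {X : Type*} (perp : X → X → Prop) (φ : Equiv.Perm X) : Prop :=
  ∀ p q : X, perp p q ↔ perp (φ p) (φ q)

/-- The group `G_{ef}`. -/
def Gef {X : Type*} (perp : X → X → Prop) (e f : X) : Set (Equiv.Perm X) :=
  {φ | IsOrthoAuto perp φ ∧ ∀ x : X, perp x e → perp x f → φ x = x}

/-- Homogeneous transitivity: (HT1) and (HT2). -/
def HomTrans {X : Type*} (perp : X → X → Prop) : Prop :=
  ∀ e f : X, e ≠ f →
    (∃ φ ∈ Gef perp e f, φ e = f) ∧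
    (∀ e' f' : X, e' ≠ f' → ∃ τ : Equiv.Perm X, IsOrthoAuto perp τ ∧ τ e = e' ∧
      Gef perp e f = (fun φ => τ⁻¹ * φ * τ) '' Gef perp e' f')

section Helpers

variable {X : Type*} {perp : X → X → Prop}

lemma mem_pperp {A : Set X} {q : X} : q ∈ pperp perp A ↔ ∀ p ∈ A, perp q p := Iff.rfl

lemma mem_pperp_pair {e f q : X} : q ∈ pperp perp {e, f} ↔ perp q e ∧ perp q f := by
  constructor
  · intro h; exact ⟨h e (by simp), h f (by simp)⟩
  · rintro ⟨h1, h2⟩ p hp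
    simp only [Set.mem_insert_iff, Set.mem_singleton_iff] at hp
    rcases hp with rfl | rfl
    · exact h1
    · exact h2

lemma isOrthoAuto_inv {τ : Equiv.Perm X} (h : IsOrthoAuto perp τ) :
    IsOrthoAuto perp τ⁻¹ := by
  intro p q
  have := h (τ⁻¹ p) (τ⁻¹ q)
  simpa using this.symm

lemma isOrthoAuto_mul {σ ρ : Equiv.Perm X} (hσ : IsOrthoAuto perp σ)
    (hρ : IsOrthoAuto perp ρ) : IsOrthoAuto perp (σ * ρ) := by
  intro p q
  exact (hρ p q).trans (hσ (ρ p) (ρ q))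

/-- conjugation identity for the groups `G_{ef}`. -/
lemma conj_Gef {τ : Equiv.Perm X} (h : IsOrthoAuto perp τ) (e f : X) :
    ((fun φ => τ⁻¹ * φ * τ) '' Gef perp e f) = Gef perp (τ⁻¹ e) (τ⁻¹ f) := by
  have hinv := isOrthoAuto_inv h
  ext ψ
  constructor
  · rintro ⟨φ, ⟨hauto, hfix⟩, rfl⟩
    refine ⟨isOrthoAuto_mul (isOrthoAuto_mul hinv hauto) h, ?_⟩
    intro x hx1 hx2
    have h1 : perp (τ x) e := by
      have := (h x (τ⁻¹ e)).1 hx1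
      simpa using this
    have h2 : perp (τ x) f := by
      have := (h x (τ⁻¹ f)).1 hx2
      simpa using this
    have := hfix (τ x) h1 h2
    simp [Equiv.Perm.mul_apply, this]
  · rintro ⟨hauto, hfix⟩
    refine ⟨τ * ψ * τ⁻¹, ⟨isOrthoAuto_mul (isOrthoAuto_mul h hauto) hinv, ?_⟩, by group⟩
    intro x hx1 hx2
    have h1 : perp (τ⁻¹ x) (τ⁻¹ e) := (hinv x e).1 hx1
    have h2 : perp (τ⁻¹ x) (τ⁻¹ f) := (hinv x f).1 hx2
    have := hfix (τ⁻¹ x) h1 h2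
    rw [Equiv.Perm.mul_apply, Equiv.Perm.mul_apply, this]; simp

variable (hsymm : ∀ x y : X, perp x y → perp y x)

/-- elements of `G_{ef}` map `{e,f}^⊥⊥` into itself. -/
lemma orbit_mem {e f x : X} {φ : Equiv.Perm X} (hφ : φ ∈ Gef perp e f)
    (hx : x ∈ pperp perp (pperp perp ({e, f} : Set X))) :
    φ x ∈ pperp perp (pperp perp ({e, f} : Set X)) := by
  intro p hp
  obtain ⟨hp1, hp2⟩ := mem_pperp_pair.1 hp
  have hfix : φ p = p := hφ.2 p hp1 hp2
  have hxp : perp x p := hx p hp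
  have := (hφ.1 x p).1 hxp
  rwa [hfix] at this

include hsymm in
lemma self_mem_C {e f : X} : e ∈ pperp perp (pperp perp ({e, f} : Set X)) := by
  intro p hp
  exact hsymm _ _ (mem_pperp_pair.1 hp).1

include hsymm in
lemma pperp_pair_eq {e f g : X}
    (hg : g ∈ pperp perp (pperp perp ({e, f} : Set X)))
    (hf : f ∈ pperp perp (pperp perp ({e, g} : Set X))) :
    pperp perp ({e, f} : Set X) = pperp perp ({e, g} : Set X) := by
  ext x
  simp only [mem_pperp_pair]
  constructor
  · rintro ⟨h1, h2⟩
    refine ⟨h1, hsymm _ _ (hg x (mem_pperp_pair.2 ⟨h1, h2⟩))⟩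
  · rintro ⟨h1, h2⟩
    refine ⟨h1, hsymm _ _ (hf x (mem_pperp_pair.2 ⟨h1, h2⟩))⟩

/-- automorphisms carry `{a,b}^⊥⊥` to `{τa, τb}^⊥⊥`. -/
lemma image_mem_C {τ : Equiv.Perm X} (h : IsOrthoAuto perp τ) {a b x : X}
    (hx : x ∈ pperp perp (pperp perp ({a, b} : Set X))) :
    τ x ∈ pperp perp (pperp perp ({τ a, τ b} : Set X)) := by
  intro r hr
  obtain ⟨hr1, hr2⟩ := mem_pperp_pair.1 hr
  have h1 : perp (τ⁻¹ r) a := by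
    have := (h (τ⁻¹ r) a).1; simp only [Equiv.Perm.inv_def, Equiv.apply_symm_apply] at *
    exact (h (τ⁻¹ r) a).2 (by simpa using hr1)
  have h2 : perp (τ⁻¹ r) b := (h (τ⁻¹ r) b).2 (by simpa using hr2)
  have := hx (τ⁻¹ r) (mem_pperp_pair.2 ⟨h1, h2⟩)
  have := (h x (τ⁻¹ r)).1 this
  simpa using this

end Helpers

section Core

variable {X : Type*} {perp : X → X → Prop}

lemma exists_perp' (hsymm : ∀ x y : X, perp x y → perp y x)
    (hirr : ∀ x : X, ¬ perp x x) (hht : HomTrans perp)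
    {a b : X} (hab : perp a b) (e : X) : ∃ y, perp y e := by
  have hne : a ≠ b := by rintro rfl; exact hirr a hab
  obtain ⟨z, hz⟩ : ∃ z : X, z ≠ e := by
    by_cases h : a = e
    · exact ⟨b, by rintro rfl; exact hne h⟩
    · exact ⟨a, h⟩
  obtain ⟨τ, hτauto, hτa, -⟩ := (hht a b hne).2 e z (Ne.symm hz)
  refine ⟨τ b, ?_⟩
  have := (hτauto b a).1 (hsymm _ _ hab)
  rwa [hτa] at this

/-- Core of (L1): we can replace `f` by some `g ⊥ e` with the same group. -/
lemma L1core (hsymm : ∀ x y : X, perp x y → perp y x)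
    (hirr : ∀ x : X, ¬ perp x x) (hht : HomTrans perp)
    {a b : X} (hab : perp a b) (e f : X) (hef : e ≠ f) :
    ∃ g, perp g e ∧ Gef perp e f = Gef perp e g := by
  obtain ⟨f', hf'⟩ := exists_perp' hsymm hirr hht hab e
  have hf'e : f' ≠ e := by rintro rfl; exact hirr f' hf'
  obtain ⟨τ, hτauto, hτe, hG⟩ := (hht e f hef).2 e f' (Ne.symm hf'e)
  have hτinve : τ⁻¹ e = e := by
    conv_lhs => rw [← hτe]
    simp
  refine ⟨τ⁻¹ f', ?_, ?_⟩
  · have := (isOrthoAuto_inv hτauto f' e).1 hf'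
    rwa [hτinve] at this
  · rw [hG, conj_Gef hτauto, hτinve]

/-- orbit + closure argument: same group for two pairs gives the same per set. -/
lemma pperp_eq_of_Gef_eq (hsymm : ∀ x y : X, perp x y → perp y x)
    (hht : HomTrans perp) {e f g : X} (hef : e ≠ f) (heg : e ≠ g)
    (hG : Gef perp e f = Gef perp e g) :
    pperp perp ({e, f} : Set X) = pperp perp ({e, g} : Set X) := by
  obtain ⟨φ, hφ, hφe⟩ := (hht e f hef).1
  obtain ⟨ψ, hψ, hψe⟩ := (hht e g heg).1
  have hfC : f ∈ pperp perp (pperp perp ({e, g} : Set X)) := by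
    rw [← hφe]
    exact orbit_mem (hG ▸ hφ) (self_mem_C hsymm)
  have hgC : g ∈ pperp perp (pperp perp ({e, f} : Set X)) := by
    rw [← hψe]
    exact orbit_mem (hG ▸ hψ) (self_mem_C hsymm)
  exact pperp_pair_eq hsymm hgC hfC

end Core

theorem stmt_10 {X : Type*} [Nonempty X] (perp : X → X → Prop)
    (hsymm : ∀ x y : X, perp x y → perp y x)
    (hirr : ∀ x : X, ¬ perp x x)
    (hht : HomTrans perp)
    (hrank : ∃ a b c d : X,
      perp a b ∧ perp a c ∧ perp a d ∧ perp b c ∧ perp b d ∧ perp c d)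
    (hnb : ¬ ∀ x y : X, perp x y ↔ x ≠ y) :
    (∀ e f : X, e ≠ f → ∃ ebar : X, perp ebar e ∧
      pperp perp (pperp perp {e, f}) = pperp perp (pperp perp ({e, ebar} : Set X))) ∧
    (∀ e f : X, perp e f →
      ∃ g ∈ pperp perp (pperp perp ({e, f} : Set X)), g ≠ e ∧ g ≠ f) := by
  obtain ⟨a, b, c, d, hab, -, -, -, -, -⟩ := hrank
  constructor
  · -- (L1)
    intro e f hef
    by_cases hperp : perp e f
    · exact ⟨f, hsymm _ _ hperp, rfl⟩
    · obtain ⟨g, hge, hG⟩ := L1core hsymm hirr hht hab e f hef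
      have heg : e ≠ g := by rintro rfl; exact hirr e hge
      exact ⟨g, hge, by rw [pperp_eq_of_Gef_eq hsymm hht hef heg hG]⟩
  · -- (L2)
    intro e f hef
    have hefne : e ≠ f := by rintro rfl; exact hirr e hef
    -- extract non-orthogonal distinct pair
    push_neg at hnb
    obtain ⟨p, q, hpq⟩ := hnb
    rcases hpq with ⟨hperp, rfl⟩ | ⟨hnperp, hpqne⟩
    · exact (hirr p hperp).elim
    -- g ⊥ p with Gef p q = Gef p g
    obtain ⟨g, hgp, hG⟩ := L1core hsymm hirr hht hab p q hpqne
    have hpg : p ≠ g := by rintro rfl; exact hirr p hgp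
    have hqg : q ≠ g := by rintro rfl; exact hnperp (hsymm _ _ hgp)
    -- q ∈ {p,g}^⊥⊥
    have hPP : pperp perp ({p, q} : Set X) = pperp perp ({p, g} : Set X) :=
      pperp_eq_of_Gef_eq hsymm hht hpqne hpg hG
    have hqC : q ∈ pperp perp (pperp perp ({p, g} : Set X)) := by
      rw [← hPP]
      intro r hr
      exact hsymm _ _ (mem_pperp_pair.1 hr).2
    have hgC : g ∈ pperp perp (pperp perp ({p, g} : Set X)) := by
      intro r hr
      exact hsymm _ _ (mem_pperp_pair.1 hr).2
    -- transport (p,g) to (e,f)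
    obtain ⟨τ, hτauto, hτp, hGt⟩ := (hht p g hpg).2 e f hefne
    have hτinve : τ⁻¹ e = p := by
      conv_lhs => rw [← hτp]
      simp
    set f₀ := τ⁻¹ f with hf₀
    have hGt' : Gef perp p g = Gef perp p f₀ := by
      rw [hGt, conj_Gef hτauto, hτinve]
    have hpf₀ : p ≠ f₀ := by
      rw [← hτinve, hf₀]
      intro h
      exact hefne (τ⁻¹.injective h)
    have hPP2 : pperp perp ({p, g} : Set X) = pperp perp ({p, f₀} : Set X) :=
      pperp_eq_of_Gef_eq hsymm hht hpg hpf₀ hGt'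
    have hqC2 : q ∈ pperp perp (pperp perp ({p, f₀} : Set X)) := by rw [← hPP2]; exact hqC
    have hgC2 : g ∈ pperp perp (pperp perp ({p, f₀} : Set X)) := by rw [← hPP2]; exact hgC
    have hτf₀ : τ f₀ = f := by simp [hf₀]
    have hτq : τ q ∈ pperp perp (pperp perp ({e, f} : Set X)) := by
      have := image_mem_C hτauto hqC2
      rwa [hτp, hτf₀] at this
    have hτg : τ g ∈ pperp perp (pperp perp ({e, f} : Set X)) := by
      have := image_mem_C hτauto hgC2
      rwa [hτp, hτf₀] at this
    by_cases hq : τ q = f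
    · refine ⟨τ g, hτg, ?_, ?_⟩
      · rw [← hτp]; exact fun h => hpg (τ.injective h).symm
      · rw [← hq]; exact fun h => hqg (τ.injective h).symm
    · refine ⟨τ q, hτq, ?_, hq⟩
      rw [← hτp]; exact fun h => hpqne (τ.injective h).symm
end

section
/- Let K be a *-sfield and H a Hermitian space over K containing four mutually orthogonal nonzero vectors, such that every nonzero vector of H has a scalar multiple w with ⟨w,w⟩ = 1, and such that the orthoset (P(H),⊥) of one-dimensional subspaces of H, with ⟨u⟩ ⊥ ⟨v⟩ iff ⟨u,v⟩ = 0, is divisibly transitive. Then the involution * is the identity on K and K is commutative (so H is a quadratic space). -/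
/-- The set `R_{ef}` of elements of `G_{ef}` possessing `k`-th roots in `G_{ef}`
for every `k ≥ 1`. -/
def RotSet {X : Type*} (perp : X → X → Prop) (e f : X) : Set (Equiv.Perm X) :=
  {φ ∈ Gef perp e f | ∀ k : ℕ, 1 ≤ k → ∃ ψ ∈ Gef perp e f, ψ ^ k = φ}

/-- Divisible transitivity: (DT0), (DT1) and (DT2). -/
def DivTrans {X : Type*} (perp : X → X → Prop) : Prop :=
  ∀ e f : X, e ≠ f →
    ((1 : Equiv.Perm X) ∈ RotSet perp e f ∧
      (∀ φ ∈ RotSet perp e f, φ⁻¹ ∈ RotSet perp e f) ∧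
      (∀ φ ∈ RotSet perp e f, ∀ ψ ∈ RotSet perp e f,
        φ * ψ ∈ RotSet perp e f ∧ φ * ψ = ψ * φ)) ∧
    (∃ φ ∈ RotSet perp e f, φ e = f) ∧
    (∀ e' f' : X, e' ≠ f' → ∃ τ : Equiv.Perm X, IsOrthoAuto perp τ ∧ τ e = e' ∧
      RotSet perp e f = (fun φ => τ⁻¹ * φ * τ) '' RotSet perp e' f')

namespace S11
set_option linter.unusedSectionVars false

section
variable {K : Type*} [DivisionRing K] [StarRing K]
  {H : Type*} [AddCommGroup H] [Module K H]

/-- Bundled hypotheses on the hermitian form. -/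
structure BForm (B : H → H → K) : Prop where
  addl : ∀ u u' v : H, B (u + u') v = B u v + B u' v
  addr : ∀ u v v' : H, B u (v + v') = B u v + B u v'
  smull : ∀ (α : K) (u v : H), B (α • u) v = α * B u v
  smulr : ∀ (α : K) (u v : H), B u (α • v) = B u v * star α
  herm : ∀ u v : H, B u v = star (B v u)
  aniso : ∀ u : H, B u u = 0 → u = 0

namespace BForm

variable {B : H → H → K} (hB : BForm B)
include hB

lemma zerol (v : H) : B 0 v = 0 := by
  have h := hB.smull 0 v v
  rw [zero_smul, zero_mul] at h
  exact h

lemma zeror (u : H) : B u 0 = 0 := by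
  rw [hB.herm, hB.zerol, star_zero]

lemma subl (u u' v : H) : B (u - u') v = B u v - B u' v := by
  have h := hB.addl (u - u') u' v
  rw [sub_add_cancel] at h
  rw [h]; abel

lemma subr (u v v' : H) : B u (v - v') = B u v - B u v' := by
  have h := hB.addr u (v - v') v'
  rw [sub_add_cancel] at h
  rw [h]; abel

lemma negl (u v : H) : B (-u) v = -B u v := by
  have := hB.subl 0 u v; simpa [hB.zerol] using this

lemma negr (u v : H) : B u (-v) = -B u v := by
  have := hB.subr u 0 v; simpa [hB.zeror] using this

lemma ne_zero_of_B_ne {u v : H} (h : B u v ≠ 0) : u ≠ 0 := by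
  rintro rfl; exact h (hB.zerol v)

lemma ne_zero_of_B_ne' {u v : H} (h : B u v ≠ 0) : v ≠ 0 := by
  rintro rfl; exact h (hB.zeror u)

lemma self_ne {u : H} (hu : u ≠ 0) : B u u ≠ 0 := fun h => hu (hB.aniso u h)

lemma eq_zero_of_right {u v : H} (h : B v u = 0) : B u v = 0 := by
  rw [hB.herm, h, star_zero]

end BForm

/-- Orthonormal system of four vectors. -/
structure ONB (B : H → H → K) (e1 e2 e3 e4 : H) : Prop where
  n1 : B e1 e1 = 1
  n2 : B e2 e2 = 1
  n3 : B e3 e3 = 1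
  n4 : B e4 e4 = 1
  o12 : B e1 e2 = 0
  o13 : B e1 e3 = 0
  o14 : B e1 e4 = 0
  o23 : B e2 e3 = 0
  o24 : B e2 e4 = 0
  o34 : B e3 e4 = 0

namespace ONB

variable {B : H → H → K} {e1 e2 e3 e4 : H}
  (hB : BForm B) (hO : ONB B e1 e2 e3 e4)
include hB hO

lemma o21 : B e2 e1 = 0 := hB.eq_zero_of_right hO.o12
lemma o31 : B e3 e1 = 0 := hB.eq_zero_of_right hO.o13
lemma o41 : B e4 e1 = 0 := hB.eq_zero_of_right hO.o14
lemma o32 : B e3 e2 = 0 := hB.eq_zero_of_right hO.o23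
lemma o42 : B e4 e2 = 0 := hB.eq_zero_of_right hO.o24
lemma o43 : B e4 e3 = 0 := hB.eq_zero_of_right hO.o34

lemma e1ne : e1 ≠ 0 := hB.ne_zero_of_B_ne (by rw [hO.n1]; exact one_ne_zero)
lemma e2ne : e2 ≠ 0 := hB.ne_zero_of_B_ne (by rw [hO.n2]; exact one_ne_zero)
lemma e3ne : e3 ≠ 0 := hB.ne_zero_of_B_ne (by rw [hO.n3]; exact one_ne_zero)
lemma e4ne : e4 ≠ 0 := hB.ne_zero_of_B_ne (by rw [hO.n4]; exact one_ne_zero)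

end ONB

/-- `p` lies in the plane spanned by `e1, e2`. -/
def isP (B : H → H → K) (e1 e2 p : H) : Prop :=
  p = B p e1 • e1 + B p e2 • e2

/-- `v` is orthogonal to `e1` and `e2`. -/
def isW (B : H → H → K) (e1 e2 v : H) : Prop :=
  B v e1 = 0 ∧ B v e2 = 0

section PW

variable {B : H → H → K} {e1 e2 e3 e4 : H}
  (hB : BForm B) (hO : ONB B e1 e2 e3 e4)
include hB hO

lemma coord1 (x y : K) : B (x • e1 + y • e2) e1 = x := by
  rw [hB.addl, hB.smull, hB.smull, hO.n1, hO.o21 hB, mul_one, mul_zero, add_zero]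

lemma coord2 (x y : K) : B (x • e1 + y • e2) e2 = y := by
  rw [hB.addl, hB.smull, hB.smull, hO.o12, hO.n2, mul_one, mul_zero, zero_add]

lemma isP_mk {p : H} (x y : K) (h : p = x • e1 + y • e2) : isP B e1 e2 p := by
  unfold isP
  rw [h, coord1 hB hO, coord2 hB hO]

lemma isP_zero : isP B e1 e2 0 :=
  isP_mk hB hO 0 0 (by simp)

lemma isP_e1 : isP B e1 e2 e1 := isP_mk hB hO 1 0 (by simp)
lemma isP_e2 : isP B e1 e2 e2 := isP_mk hB hO 0 1 (by simp)

lemma isP_add {p q : H} (hp : isP B e1 e2 p) (hq : isP B e1 e2 q) :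
    isP B e1 e2 (p + q) := by
  refine isP_mk hB hO (B p e1 + B q e1) (B p e2 + B q e2) ?_
  rw [add_smul, add_smul]
  calc p + q = (B p e1 • e1 + B p e2 • e2) + (B q e1 • e1 + B q e2 • e2) := by
        rw [← hp, ← hq]
    _ = B p e1 • e1 + B q e1 • e1 + (B p e2 • e2 + B q e2 • e2) := by abel

lemma isP_smul {p : H} (c : K) (hp : isP B e1 e2 p) : isP B e1 e2 (c • p) := by
  refine isP_mk hB hO (c * B p e1) (c * B p e2) ?_
  rw [mul_smul, mul_smul, ← smul_add, ← hp]

lemma isP_neg {p : H} (hp : isP B e1 e2 p) : isP B e1 e2 (-p) := by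
  have := isP_smul hB hO (-1 : K) hp; simpa using this

lemma isP_sub {p q : H} (hp : isP B e1 e2 p) (hq : isP B e1 e2 q) :
    isP B e1 e2 (p - q) := by
  have := isP_add hB hO hp (isP_neg hB hO hq); simpa [sub_eq_add_neg] using this

lemma isW_add {v w : H} (hv : isW B e1 e2 v) (hw : isW B e1 e2 w) :
    isW B e1 e2 (v + w) :=
  ⟨by rw [hB.addl, hv.1, hw.1, add_zero], by rw [hB.addl, hv.2, hw.2, add_zero]⟩

lemma isW_smul {v : H} (c : K) (hv : isW B e1 e2 v) : isW B e1 e2 (c • v) :=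
  ⟨by rw [hB.smull, hv.1, mul_zero], by rw [hB.smull, hv.2, mul_zero]⟩

lemma isW_sub {v w : H} (hv : isW B e1 e2 v) (hw : isW B e1 e2 w) :
    isW B e1 e2 (v - w) :=
  ⟨by rw [hB.subl, hv.1, hw.1, sub_zero], by rw [hB.subl, hv.2, hw.2, sub_zero]⟩

lemma isW_e3 : isW B e1 e2 e3 := ⟨hO.o31 hB, hO.o32 hB⟩
lemma isW_e4 : isW B e1 e2 e4 := ⟨hO.o41 hB, hO.o42 hB⟩

lemma PW_zero {p w : H} (hp : isP B e1 e2 p) (hw : isW B e1 e2 w) : B p w = 0 := by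
  rw [hp, hB.addl, hB.smull, hB.smull,
    hB.eq_zero_of_right hw.1, hB.eq_zero_of_right hw.2]
  simp

lemma WP_zero {p w : H} (hw : isW B e1 e2 w) (hp : isP B e1 e2 p) : B w p = 0 :=
  hB.eq_zero_of_right (PW_zero hB hO hp hw)

lemma PcapW {p : H} (hp : isP B e1 e2 p) (hw : isW B e1 e2 p) : p = 0 := by
  rw [hp, hw.1, hw.2]; simp

lemma pw_ne {p w : H} (hp : isP B e1 e2 p) (hw : isW B e1 e2 w) (h0 : w ≠ 0) :
    p + w ≠ 0 := by
  intro h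
  have hwp : w = -p := by linear_combination (norm := abel) h
  have : isP B e1 e2 w := hwp ▸ isP_neg hB hO hp
  exact h0 (PcapW hB hO this hw)

lemma split {p q w w' : H} (hp : isP B e1 e2 p) (hq : isP B e1 e2 q)
    (hw : isW B e1 e2 w) (hw' : isW B e1 e2 w') :
    B (p + w) (q + w') = B p q + B w w' := by
  rw [hB.addl, hB.addr, hB.addr, PW_zero hB hO hp hw', WP_zero hB hO hw hq]
  abel

lemma ppart_isP (v : H) : isP B e1 e2 (B v e1 • e1 + B v e2 • e2) :=
  isP_mk hB hO _ _ rfl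

lemma wpart_isW (v : H) : isW B e1 e2 (v - (B v e1 • e1 + B v e2 • e2)) := by
  constructor
  · rw [hB.subl, coord1 hB hO, sub_self]
  · rw [hB.subl, coord2 hB hO, sub_self]

lemma dec (v : H) : v = (B v e1 • e1 + B v e2 • e2) + (v - (B v e1 • e1 + B v e2 • e2)) := by
  abel

lemma unique_dec {p w p' w' : H} (hp : isP B e1 e2 p) (hw : isW B e1 e2 w)
    (hp' : isP B e1 e2 p') (hw' : isW B e1 e2 w') (h : p + w = p' + w') :
    p = p' ∧ w = w' := by
  have h1 : p - p' = w' - w := by linear_combination (norm := abel) h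
  have h2 : p - p' = 0 := PcapW hB hO (isP_sub hB hO hp hp') (h1 ▸ isW_sub hB hO hw' hw)
  constructor
  · linear_combination (norm := abel) h2
  · have : w' - w = 0 := h1 ▸ h2
    linear_combination (norm := abel) - this

lemma Pnondeg {x : H} (hx : isP B e1 e2 x)
    (h : ∀ y, isP B e1 e2 y → B x y = 0) : x = 0 :=
  hB.aniso x (h x hx)

end PW

end

/-- The type of one-dimensional subspaces. -/
abbrev XT (K : Type*) [DivisionRing K] (H : Type*) [AddCommGroup H] [Module K H] :=
  {S : Submodule K H // ∃ u : H, u ≠ 0 ∧ S = Submodule.span K {u}}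

section Lines

variable {K : Type*} [DivisionRing K] [StarRing K]
  {H : Type*} [AddCommGroup H] [Module K H]

/-- The line spanned by a nonzero vector, as an element of `XT K H`. -/
def lin (v : H) (hv : v ≠ 0) : XT K H := ⟨Submodule.span K {v}, v, hv, rfl⟩

/-- The orthogonality relation. -/
def prp (B : H → H → K) (S T : XT K H) : Prop := ∀ u ∈ S.1, ∀ v ∈ T.1, B u v = 0

lemma mem_lin (v : H) (hv : v ≠ 0) : v ∈ (lin (K := K) v hv).1 :=
  Submodule.mem_span_singleton_self v

lemma mem_lin_iff {u v : H} (hv : v ≠ 0) :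
    u ∈ (lin (K := K) v hv).1 ↔ ∃ c : K, u = c • v := by
  rw [lin]
  simp only [Submodule.mem_span_singleton]
  constructor
  · rintro ⟨c, h⟩; exact ⟨c, h.symm⟩
  · rintro ⟨c, h⟩; exact ⟨c, h.symm⟩

lemma span_smul_eq {c : K} (hc : c ≠ 0) (v : H) :
    Submodule.span K {c • v} = Submodule.span K {v} :=
  Submodule.span_singleton_smul_eq (isUnit_iff_ne_zero.2 hc) v

lemma smul_ne_zero' {c : K} {v : H} (hc : c ≠ 0) (hv : v ≠ 0) : c • v ≠ 0 := by
  intro h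
  apply hv
  have : c⁻¹ • (c • v) = 0 := by rw [h, smul_zero]
  rwa [smul_smul, inv_mul_cancel₀ hc, one_smul] at this

lemma lin_eq_iff {u v : H} (hu : u ≠ 0) (hv : v ≠ 0) :
    lin (K := K) u hu = lin v hv ↔ ∃ c : K, c ≠ 0 ∧ u = c • v := by
  constructor
  · intro h
    have hm : u ∈ (lin (K := K) v hv).1 := by rw [← h]; exact mem_lin u hu
    obtain ⟨c, hc⟩ := (mem_lin_iff hv).1 hm
    refine ⟨c, ?_, hc⟩
    rintro rfl
    rw [zero_smul] at hc
    exact hu hc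
  · rintro ⟨c, hc, rfl⟩
    apply Subtype.ext
    exact span_smul_eq hc v

lemma lin_eq_of_span {u v : H} (hu : u ≠ 0) (hv : v ≠ 0)
    (h : Submodule.span K {u} = Submodule.span K {v}) :
    lin (K := K) u hu = lin v hv := Subtype.ext h

lemma X_cases (x : XT K H) : ∃ (v : H) (hv : v ≠ 0), x = lin v hv := by
  obtain ⟨v, hv, hx⟩ := x.2
  exact ⟨v, hv, Subtype.ext hx⟩

variable {B : H → H → K} {e1 e2 e3 e4 : H}
  (hB : BForm B) (hO : ONB B e1 e2 e3 e4)
include hB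

lemma perp_lin {u v : H} (hu : u ≠ 0) (hv : v ≠ 0) :
    prp B (lin u hu) (lin v hv) ↔ B u v = 0 := by
  constructor
  · intro h; exact h u (mem_lin u hu) v (mem_lin v hv)
  · intro h a ha b hb
    obtain ⟨c, rfl⟩ := (mem_lin_iff hu).1 ha
    obtain ⟨d, rfl⟩ := (mem_lin_iff hv).1 hb
    rw [hB.smull, hB.smulr, h]
    simp

include hO

lemma norm_unique {q q' w : H} (hq : isP B e1 e2 q) (hq' : isP B e1 e2 q')
    (hw : isW B e1 e2 w) (h0 : w ≠ 0)
    (h : Submodule.span K {q + w} = Submodule.span K {q' + w}) : q = q' := by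
  have hm : q + w ∈ Submodule.span K {q' + w} := by
    rw [← h]; exact Submodule.mem_span_singleton_self _
  obtain ⟨c, hc⟩ := Submodule.mem_span_singleton.1 hm
  rw [smul_add] at hc
  have h2 := unique_dec hB hO (isP_smul hB hO c hq') (isW_smul hB hO c hw) hq hw hc
  have hc1 : c = 1 := by
    have h3 : (c - 1) • w = 0 := by
      rw [sub_smul, one_smul, h2.2, sub_self]
    by_contra hne
    have hne' : c - 1 ≠ 0 := fun h4 => hne (by rwa [sub_eq_zero] at h4)
    exact h0 (by
      have := congrArg (fun z => (c - 1)⁻¹ • z) h3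
      simpa [smul_smul, inv_mul_cancel₀ hne'] using this)
  rw [← h2.1, hc1, one_smul]

end Lines

section TwoDim

variable {K : Type*} [DivisionRing K] [StarRing K]
  {H : Type*} [AddCommGroup H] [Module K H]
  {B : H → H → K} {e1 e2 e3 e4 : H}
  (hB : BForm B) (hO : ONB B e1 e2 e3 e4)
include hB hO

lemma BPP (x₁ x₂ a₁ a₂ : K) :
    B (x₁ • e1 + x₂ • e2) (a₁ • e1 + a₂ • e2) = x₁ * star a₁ + x₂ * star a₂ := by
  simp [hB.addl, hB.addr, hB.smull, hB.smulr, hO.n1, hO.n2, hO.o12, hO.o21 hB]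

lemma Be1P (a₁ a₂ : K) : B e1 (a₁ • e1 + a₂ • e2) = star a₁ := by
  simp [hB.addr, hB.smulr, hO.n1, hO.o12]

lemma Be2P (a₁ a₂ : K) : B e2 (a₁ • e1 + a₂ • e2) = star a₂ := by
  simp [hB.addr, hB.smulr, hO.n2, hO.o21 hB]

lemma isP_ex {p : H} (hp : isP B e1 e2 p) : ∃ x y : K, p = x • e1 + y • e2 :=
  ⟨_, _, hp⟩

lemma combo_zero {x₁ x₂ : K} (h : x₁ • e1 + x₂ • e2 = 0) : x₁ = 0 ∧ x₂ = 0 := by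
  constructor
  · have := coord1 hB hO x₁ x₂; rw [h, hB.zerol] at this; exact this.symm
  · have := coord2 hB hO x₁ x₂; rw [h, hB.zerol] at this; exact this.symm

omit hO hB in
lemma prop_core {u₀ x z : H} {xc zc : K} (hx : x = xc • u₀) (hz : z = zc • u₀)
    (hxc : xc ≠ 0) : z = (zc * xc⁻¹) • x := by
  rw [hx, hz, smul_smul, mul_assoc, inv_mul_cancel₀ hxc, mul_one]

/-- Two nonzero plane vectors left-orthogonal to the same nonzero plane vector
are proportional. -/
lemma leftUnique {a x z : H} (ha : isP B e1 e2 a) (ha0 : a ≠ 0)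
    (hx : isP B e1 e2 x) (hx0 : x ≠ 0) (hz : isP B e1 e2 z) (hz0 : z ≠ 0)
    (h1 : B x a = 0) (h2 : B z a = 0) : ∃ c : K, c ≠ 0 ∧ z = c • x := by
  obtain ⟨a₁, a₂, rfl⟩ := isP_ex hB hO ha
  obtain ⟨x₁, x₂, rfl⟩ := isP_ex hB hO hx
  obtain ⟨z₁, z₂, rfl⟩ := isP_ex hB hO hz
  rw [BPP hB hO] at h1 h2
  by_cases ha1 : a₁ = 0
  · have ha2 : star a₂ ≠ 0 := by
      intro h
      rw [star_eq_zero] at h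
      exact ha0 (by rw [ha1, h]; simp)
    rw [ha1, star_zero, mul_zero, zero_add] at h1 h2
    have hx2 : x₂ = 0 := by
      rcases mul_eq_zero.1 h1 with h | h
      · exact h
      · exact absurd h ha2
    have hz2 : z₂ = 0 := by
      rcases mul_eq_zero.1 h2 with h | h
      · exact h
      · exact absurd h ha2
    have hx1 : x₁ ≠ 0 := by
      intro h; exact hx0 (by rw [h, hx2]; simp)
    have hz1 : z₁ ≠ 0 := by
      intro h; exact hz0 (by rw [h, hz2]; simp)
    refine ⟨z₁ * x₁⁻¹, by simp [hz1, hx1], ?_⟩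
    exact prop_core (u₀ := e1) (by rw [hx2]; simp) (by rw [hz2]; simp) hx1
  · have hsa1 : star a₁ ≠ 0 := fun h => ha1 (star_eq_zero.1 h)
    set m : K := -(star a₂ * (star a₁)⁻¹) with hm
    have key : ∀ y₁ y₂ : K, y₁ * star a₁ + y₂ * star a₂ = 0 → y₁ = y₂ * m := by
      intro y₁ y₂ h
      have h' : y₁ * star a₁ = -(y₂ * star a₂) := eq_neg_of_add_eq_zero_left h
      have : y₁ * star a₁ * (star a₁)⁻¹ = -(y₂ * star a₂) * (star a₁)⁻¹ := by rw [h']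
      rw [mul_assoc, mul_inv_cancel₀ hsa1, mul_one] at this
      rw [this, hm, neg_mul, mul_assoc, mul_neg]
    have hx1 := key _ _ h1
    have hz1 := key _ _ h2
    have hcx : x₁ • e1 + x₂ • e2 = x₂ • (m • e1 + e2) := by
      rw [smul_add, smul_smul, ← hx1]
    have hcz : z₁ • e1 + z₂ • e2 = z₂ • (m • e1 + e2) := by
      rw [smul_add, smul_smul, ← hz1]
    have hx2 : x₂ ≠ 0 := by
      intro h
      rw [h, zero_mul] at hx1
      exact hx0 (by rw [hx1, h]; simp)
    have hz2 : z₂ ≠ 0 := by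
      intro h
      rw [h, zero_mul] at hz1
      exact hz0 (by rw [hz1, h]; simp)
    exact ⟨z₂ * x₂⁻¹, by simp [hz2, hx2], prop_core hcx hcz hx2⟩

/-- Two nonzero plane vectors right-orthogonal to the same nonzero plane vector
are proportional. -/
lemma rightUnique {a x z : H} (ha : isP B e1 e2 a) (ha0 : a ≠ 0)
    (hx : isP B e1 e2 x) (hx0 : x ≠ 0) (hz : isP B e1 e2 z) (hz0 : z ≠ 0)
    (h1 : B a x = 0) (h2 : B a z = 0) : ∃ c : K, c ≠ 0 ∧ z = c • x := by
  obtain ⟨a₁, a₂, rfl⟩ := isP_ex hB hO ha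
  obtain ⟨x₁, x₂, rfl⟩ := isP_ex hB hO hx
  obtain ⟨z₁, z₂, rfl⟩ := isP_ex hB hO hz
  rw [BPP hB hO] at h1 h2
  by_cases ha1 : a₁ = 0
  · have ha2 : a₂ ≠ 0 := by
      intro h
      exact ha0 (by rw [ha1, h]; simp)
    rw [ha1, zero_mul, zero_add] at h1 h2
    have hx2 : x₂ = 0 := by
      rcases mul_eq_zero.1 h1 with h | h
      · exact absurd h ha2
      · exact star_eq_zero.1 h
    have hz2 : z₂ = 0 := by
      rcases mul_eq_zero.1 h2 with h | h
      · exact absurd h ha2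
      · exact star_eq_zero.1 h
    have hx1 : x₁ ≠ 0 := by
      intro h; exact hx0 (by rw [h, hx2]; simp)
    have hz1 : z₁ ≠ 0 := by
      intro h; exact hz0 (by rw [h, hz2]; simp)
    refine ⟨z₁ * x₁⁻¹, by simp [hz1, hx1], ?_⟩
    exact prop_core (u₀ := e1) (by rw [hx2]; simp) (by rw [hz2]; simp) hx1
  · set m : K := -(star a₂ * (star a₁)⁻¹) with hm
    have key : ∀ y₁ y₂ : K, a₁ * star y₁ + a₂ * star y₂ = 0 → y₁ = y₂ * m := by
      intro y₁ y₂ h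
      have h' : a₁ * star y₁ = -(a₂ * star y₂) := eq_neg_of_add_eq_zero_left h
      have h'' : star y₁ = -(a₁⁻¹ * (a₂ * star y₂)) := by
        have : a₁⁻¹ * (a₁ * star y₁) = a₁⁻¹ * -(a₂ * star y₂) := by rw [h']
        rwa [← mul_assoc, inv_mul_cancel₀ ha1, one_mul, mul_neg] at this
      have := congrArg star h''
      rw [star_star, star_neg, star_mul, star_mul, star_star, star_inv₀] at this
      rw [this, hm, mul_neg, mul_assoc]
    have hx1 := key _ _ h1
    have hz1 := key _ _ h2
    have hcx : x₁ • e1 + x₂ • e2 = x₂ • (m • e1 + e2) := by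
      rw [smul_add, smul_smul, ← hx1]
    have hcz : z₁ • e1 + z₂ • e2 = z₂ • (m • e1 + e2) := by
      rw [smul_add, smul_smul, ← hz1]
    have hx2 : x₂ ≠ 0 := by
      intro h
      rw [h, zero_mul] at hx1
      exact hx0 (by rw [hx1, h]; simp)
    have hz2 : z₂ ≠ 0 := by
      intro h
      rw [h, zero_mul] at hz1
      exact hz0 (by rw [hz1, h]; simp)
    exact ⟨z₂ * x₂⁻¹, by simp [hz2, hx2], prop_core hcx hcz hx2⟩

/-- Existence of a left-orthogonal nonzero plane vector. -/
lemma leftOrth {p : H} (hp : isP B e1 e2 p) (hp0 : p ≠ 0) :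
    ∃ t, isP B e1 e2 t ∧ t ≠ 0 ∧ B t p = 0 := by
  obtain ⟨p₁, p₂, rfl⟩ := isP_ex hB hO hp
  by_cases hp1 : p₁ = 0
  · exact ⟨e1, isP_e1 hB hO, hO.e1ne hB, by rw [Be1P hB hO, hp1, star_zero]⟩
  · have hsp1 : star p₁ ≠ 0 := fun h => hp1 (star_eq_zero.1 h)
    refine ⟨(-(star p₂ * (star p₁)⁻¹)) • e1 + (1 : K) • e2, isP_mk hB hO _ _ rfl, ?_, ?_⟩
    · intro h
      have := (combo_zero hB hO h).2
      exact one_ne_zero this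
    · rw [BPP hB hO, neg_mul, mul_assoc, inv_mul_cancel₀ hsp1, mul_one, one_mul,
        neg_add_cancel]

/-- Existence of a right-orthogonal nonzero plane vector. -/
lemma rightOrth {p : H} (hp : isP B e1 e2 p) (hp0 : p ≠ 0) :
    ∃ q, isP B e1 e2 q ∧ q ≠ 0 ∧ B p q = 0 := by
  obtain ⟨p₁, p₂, rfl⟩ := isP_ex hB hO hp
  by_cases hp1 : p₁ = 0
  · refine ⟨e1, isP_e1 hB hO, hO.e1ne hB, ?_⟩
    have := coord1 hB hO p₁ p₂
    rw [hp1] at this ⊢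
    exact this
  · refine ⟨(star (-(p₁⁻¹ * p₂))) • e1 + (1 : K) • e2, isP_mk hB hO _ _ rfl, ?_, ?_⟩
    · intro h
      have := (combo_zero hB hO h).2
      exact one_ne_zero this
    · rw [BPP hB hO, star_star, star_one, mul_one, mul_neg, ← mul_assoc,
        mul_inv_cancel₀ hp1, one_mul, neg_add_cancel]

end TwoDim

section Wside

variable {K : Type*} [DivisionRing K] [StarRing K]
  {H : Type*} [AddCommGroup H] [Module K H]
  {B : H → H → K} {e1 e2 e3 e4 : H}
  (hB : BForm B) (hO : ONB B e1 e2 e3 e4)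
include hB

lemma proj_orth {u w : H} (hw0 : w ≠ 0) :
    B (u - (B u w * (B w w)⁻¹) • w) w = 0 := by
  rw [hB.subl, hB.smull, mul_assoc, inv_mul_cancel₀ (hB.self_ne hw0), mul_one, sub_self]

include hO

/-- Prescribing two values of the form on `W`. -/
lemma existsY {w x : H} (hw : isW B e1 e2 w) (hw0 : w ≠ 0) (hx : isW B e1 e2 x)
    (hind : ∀ δ : K, x ≠ δ • w) (a b : K) :
    ∃ y, isW B e1 e2 y ∧ B w y = a ∧ B x y = b := by
  set k : K := B x w * (B w w)⁻¹ with hk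
  set x' : H := x - k • w with hx'def
  have hx'W : isW B e1 e2 x' := isW_sub hB hO hx (isW_smul hB hO k hw)
  have hx'0 : x' ≠ 0 := by
    intro h
    exact hind k (by rw [← sub_eq_zero]; exact h)
  have hBx'w : B x' w = 0 := proj_orth hB hw0
  have hBwx' : B w x' = 0 := hB.eq_zero_of_right hBx'w
  have hxdec : x = x' + k • w := by rw [hx'def]; abel
  have hBxx' : B x x' = B x' x' := by
    rw [hxdec, hB.addl, hB.smull, hBwx', mul_zero, add_zero]
  have hBxx'0 : B x x' ≠ 0 := by rw [hBxx']; exact hB.self_ne hx'0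
  set γ : K := star ((B w w)⁻¹ * a) with hγ
  set δ : K := star ((B x x')⁻¹ * (b - B x w * star γ)) with hδ
  refine ⟨γ • w + δ • x', isW_add hB hO (isW_smul hB hO γ hw) (isW_smul hB hO δ hx'W), ?_, ?_⟩
  · rw [hB.addr, hB.smulr, hB.smulr, hγ, star_star, hBwx', zero_mul, add_zero,
      ← mul_assoc, mul_inv_cancel₀ (hB.self_ne hw0), one_mul]
  · rw [hB.addr, hB.smulr, hB.smulr]
    simp only [hγ, hδ, star_star]
    have hc : B x x' * ((B x x')⁻¹ * (b - B x w * ((B w w)⁻¹ * a)))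
        = b - B x w * ((B w w)⁻¹ * a) := by
      rw [← mul_assoc, mul_inv_cancel₀ hBxx'0, one_mul]
    rw [hc]
    abel

end Wside

section Sigma

variable {K : Type*} [DivisionRing K] [StarRing K]
  {H : Type*} [AddCommGroup H] [Module K H]
  {B : H → H → K} {e1 e2 e3 e4 : H}
  (hB : BForm B) (hO : ONB B e1 e2 e3 e4)
  {σ : Equiv.Perm (XT K H)}
  (hσ : σ ∈ Gef (prp B) (lin e1 (hO.e1ne hB)) (lin e2 (hO.e2ne hB)))
include hB hO hσ

lemma fixW {w : H} (hw : isW B e1 e2 w) (h0 : w ≠ 0) :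
    σ (lin w h0) = lin w h0 := by
  refine hσ.2 _ ?_ ?_
  · exact (perp_lin hB h0 (hO.e1ne hB)).2 hw.1
  · exact (perp_lin hB h0 (hO.e2ne hB)).2 hw.2

lemma transfer {u v : H} (hu : u ≠ 0) (hv : v ≠ 0) {u' v' : H} (hu' : u' ≠ 0)
    (hv' : v' ≠ 0) (h1 : σ (lin u hu) = lin u' hu') (h2 : σ (lin v hv) = lin v' hv') :
    B u v = 0 ↔ B u' v' = 0 := by
  have h := hσ.1 (lin u hu) (lin v hv)
  rw [h1, h2, perp_lin hB, perp_lin hB] at h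
  exact h

lemma stepA {p w : H} (hp : isP B e1 e2 p) (hw : isW B e1 e2 w) (h0 : w ≠ 0) :
    ∃ q, isP B e1 e2 q ∧
      (σ (lin (p + w) (pw_ne hB hO hp hw h0))).1 = Submodule.span K {q + w} := by
  obtain ⟨v', hv', hx⟩ := X_cases (σ (lin (p + w) (pw_ne hB hO hp hw h0)))
  have key : ∀ x, isW B e1 e2 x → ∀ h0x : x ≠ 0, (B w x = 0 ↔ B v' x = 0) := by
    intro x hxW h0x
    have h1 := transfer hB hO hσ (pw_ne hB hO hp hw h0) h0x hv' h0x hx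
      (fixW hB hO hσ hxW h0x)
    rw [hB.addl, PW_zero hB hO hp hxW, zero_add] at h1
    exact h1
  set p' : H := B v' e1 • e1 + B v' e2 • e2 with hp'def
  set w₀ : H := v' - p' with hw₀def
  have hp'P : isP B e1 e2 p' := ppart_isP hB hO v'
  have hw₀W : isW B e1 e2 w₀ := wpart_isW hB hO v'
  have hdec : v' = p' + w₀ := by rw [hw₀def]; abel
  have hBv' : ∀ x, isW B e1 e2 x → B v' x = B w₀ x := by
    intro x hxW
    rw [hdec, hB.addl, PW_zero hB hO hp'P hxW, zero_add]
  have hw₀0 : w₀ ≠ 0 := by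
    intro h
    have h1 : B v' w = 0 := by rw [hBv' w hw, h, hB.zerol]
    exact hB.self_ne h0 ((key w hw h0).2 h1)
  set k : K := B w₀ w * (B w w)⁻¹ with hk
  set x₀ : H := w₀ - k • w with hx₀def
  have hx₀W : isW B e1 e2 x₀ := isW_sub hB hO hw₀W (isW_smul hB hO k hw)
  have hx₀0 : x₀ = 0 := by
    by_contra hne
    have hBx₀w : B x₀ w = 0 := proj_orth hB h0
    have hBwx₀ : B w x₀ = 0 := hB.eq_zero_of_right hBx₀w
    have h1 := (key x₀ hx₀W hne).1 hBwx₀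
    rw [hBv' x₀ hx₀W] at h1
    have hdec2 : w₀ = x₀ + k • w := by rw [hx₀def]; abel
    rw [hdec2, hB.addl, hB.smull, hBwx₀, mul_zero, add_zero] at h1
    exact hB.self_ne hne h1
  have hw₀k : w₀ = k • w := by
    have := sub_eq_zero.1 hx₀0
    exact this
  have hk0 : k ≠ 0 := by
    intro h
    rw [h, zero_smul] at hw₀k
    exact hw₀0 hw₀k
  refine ⟨k⁻¹ • p', isP_smul hB hO _ hp'P, ?_⟩
  have h1 : (σ (lin (p + w) (pw_ne hB hO hp hw h0))).1 = Submodule.span K {v'} := by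
    rw [hx]; rfl
  rw [h1]
  have h2 : k⁻¹ • v' = k⁻¹ • p' + w := by
    rw [hdec, hw₀k, smul_add, smul_smul, inv_mul_cancel₀ hk0, one_smul]
  rw [← h2, span_smul_eq (inv_ne_zero hk0)]

lemma imP {p : H} (hp : isP B e1 e2 p) (h0 : p ≠ 0) :
    ∃ t, isP B e1 e2 t ∧ ∃ h0t : t ≠ 0, σ (lin p h0) = lin t h0t := by
  obtain ⟨v', hv', hx⟩ := X_cases (σ (lin p h0))
  have key : ∀ x, isW B e1 e2 x → ∀ h0x : x ≠ 0, B v' x = 0 := by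
    intro x hxW h0x
    have h1 := transfer hB hO hσ h0 h0x hv' h0x hx (fixW hB hO hσ hxW h0x)
    exact h1.1 (PW_zero hB hO hp hxW)
  have hw₀W : isW B e1 e2 (v' - (B v' e1 • e1 + B v' e2 • e2)) := wpart_isW hB hO v'
  have hv'P : isP B e1 e2 v' := by
    by_cases hne : v' - (B v' e1 • e1 + B v' e2 • e2) = 0
    · unfold isP
      rw [← sub_eq_zero]
      exact hne
    · exfalso
      have h1 := key _ hw₀W hne
      have h3 : v' - (v' - (B v' e1 • e1 + B v' e2 • e2)) = B v' e1 • e1 + B v' e2 • e2 :=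
        sub_sub_cancel _ _
      have h2 := hB.subl v' (v' - (B v' e1 • e1 + B v' e2 • e2))
        (v' - (B v' e1 • e1 + B v' e2 • e2))
      rw [h3, h1, PW_zero hB hO (ppart_isP hB hO v') hw₀W, zero_sub] at h2
      exact hB.self_ne hne (neg_eq_zero.1 h2.symm)
  exact ⟨v', hv'P, hv', hx⟩

lemma inv_mem : σ⁻¹ ∈ Gef (prp B) (lin e1 (hO.e1ne hB)) (lin e2 (hO.e2ne hB)) := by
  constructor
  · intro x y
    have h := hσ.1 (σ⁻¹ x) (σ⁻¹ y)
    rw [← Equiv.Perm.mul_apply, mul_inv_cancel, Equiv.Perm.one_apply, ← Equiv.Perm.mul_apply, mul_inv_cancel, Equiv.Perm.one_apply] at h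
    exact h.symm
  · intro x h1 h2
    have h := hσ.2 x h1 h2
    calc σ⁻¹ x = σ⁻¹ (σ x) := by rw [h]
    _ = x := Equiv.symm_apply_apply σ x

lemma exists_U0 :
    ∃ U : H → H,
      (∀ p, isP B e1 e2 p → isP B e1 e2 (U p)) ∧
      (∀ p q, isP B e1 e2 p → isP B e1 e2 q → B (U p) (U q) = B p q) ∧
      (∀ p (hp : isP B e1 e2 p) (w) (hw : isW B e1 e2 w) (h0 : w ≠ 0),
        (σ (lin (p + w) (pw_ne hB hO hp hw h0))).1 = Submodule.span K {U p + w}) ∧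
      (∀ p (hp : isP B e1 e2 p) (h0 : p ≠ 0),
        (σ (lin p h0)).1 = Submodule.span K {U p}) := by
  classical
  choose A hA1 hA2 using fun (p w : H) (hp : isP B e1 e2 p) (hw : isW B e1 e2 w)
    (h0 : w ≠ 0) => stepA hB hO hσ hp hw h0
  have i3 : isW B e1 e2 e3 := isW_e3 hB hO
  have i4 : isW B e1 e2 e4 := isW_e4 hB hO
  have n3 : e3 ≠ 0 := hO.e3ne hB
  have n4 : e4 ≠ 0 := hO.e4ne hB
  -- A at 0 vanishes
  have hA0 : ∀ (w) (hp : isP B e1 e2 0) (hw : isW B e1 e2 w) (h0 : w ≠ 0),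
      A 0 w hp hw h0 = 0 := by
    intro w hp hw h0
    have h1 : lin (0 + w) (pw_ne hB hO hp hw h0) = lin w h0 :=
      Subtype.ext (by
        show Submodule.span K {(0 : H) + w} = Submodule.span K {w}
        rw [zero_add])
    have h2 := hA2 0 w hp hw h0
    rw [h1, fixW hB hO hσ hw h0] at h2
    refine norm_unique hB hO (hA1 0 w hp hw h0) (isP_zero hB hO) hw h0 ?_
    rw [zero_add, ← h2]
    rfl
  -- A is nonzero away from 0
  have hAne : ∀ p w hp hw h0, p ≠ 0 → A p w hp hw h0 ≠ 0 := by
    intro p w hp hw h0 hp0 hzero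
    have h2 := hA2 p w hp hw h0
    rw [hzero, zero_add] at h2
    have h4 : σ (lin (p + w) (pw_ne hB hO hp hw h0)) = lin w h0 := Subtype.ext h2
    have h5 : σ (lin w h0) = lin w h0 := fixW hB hO hσ hw h0
    have h6 : lin (p + w) (pw_ne hB hO hp hw h0) = lin w h0 :=
      σ.injective (h4.trans h5.symm)
    obtain ⟨c, hc0, hc⟩ := (lin_eq_iff _ h0).1 h6
    have hpw : p = (c - 1) • w := by
      rw [sub_smul, one_smul, ← hc]; abel
    exact hp0 (PcapW hB hO hp (by rw [hpw]; exact isW_smul hB hO (c - 1) hw))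
  -- orthogonality transfer
  have hT2 : ∀ p q w w' hp hq hw hw' h0 h0',
      (B p q + B w w' = 0 ↔
        B (A p w hp hw h0) (A q w' hq hw' h0') + B w w' = 0) := by
    intro p q w w' hp hq hw hw' h0 h0'
    have h1 := hσ.1 (lin (p + w) (pw_ne hB hO hp hw h0))
      (lin (q + w') (pw_ne hB hO hq hw' h0'))
    have e1' : σ (lin (p + w) (pw_ne hB hO hp hw h0)) =
        lin (A p w hp hw h0 + w) (pw_ne hB hO (hA1 p w hp hw h0) hw h0) :=
      Subtype.ext (hA2 p w hp hw h0)
    have e2' : σ (lin (q + w') (pw_ne hB hO hq hw' h0')) =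
        lin (A q w' hq hw' h0' + w') (pw_ne hB hO (hA1 q w' hq hw' h0') hw' h0') :=
      Subtype.ext (hA2 q w' hq hw' h0')
    rw [e1', e2', perp_lin hB, perp_lin hB, split hB hO hp hq hw hw',
      split hB hO (hA1 p w hp hw h0) (hA1 q w' hq hw' h0') hw hw'] at h1
    exact h1
  -- images with different W-anchors are proportional
  have hclaim1 : ∀ p w w' hp (hp0 : p ≠ 0) hw h0 hw' h0',
      ∃ c : K, c ≠ 0 ∧ A p w' hp hw' h0' = c • A p w hp hw h0 := by
    intro p w w' hp hp0 hw h0 hw' h0'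
    obtain ⟨t, htP, ht0, htp⟩ := leftOrth hB hO hp hp0
    obtain ⟨t', ht'P, ht'0, him⟩ := imP hB hO hσ htP ht0
    have key : ∀ (w₁ : H) (hw₁ : isW B e1 e2 w₁) (h0₁ : w₁ ≠ 0),
        B t' (A p w₁ hp hw₁ h0₁) = 0 := by
      intro w₁ hw₁ h0₁
      have h1 := transfer hB hO hσ ht0 (pw_ne hB hO hp hw₁ h0₁) ht'0
        (pw_ne hB hO (hA1 p w₁ hp hw₁ h0₁) hw₁ h0₁) him
        (Subtype.ext (hA2 p w₁ hp hw₁ h0₁))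
      have h2 : B t (p + w₁) = 0 := by
        rw [hB.addr, htp, PW_zero hB hO htP hw₁, add_zero]
      have h3 := h1.1 h2
      rwa [hB.addr, PW_zero hB hO ht'P hw₁, add_zero] at h3
    exact rightUnique hB hO ht'P ht'0 (hA1 p w hp hw h0) (hAne p w hp hw h0 hp0)
      (hA1 p w' hp hw' h0') (hAne p w' hp hw' h0' hp0) (key w hw h0) (key w' hw' h0')
  -- independence of the W-anchor, one step
  have hsub : ∀ p w x hp (hp0 : p ≠ 0) hw (h0w : w ≠ 0) hx
      (hind : ∀ δ : K, x ≠ δ • w) (h0x : x ≠ 0),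
      A p w hp hw h0w = A p x hp hx h0x := by
    intro p w x hp hp0 hw h0w hx hind h0x
    have hqP : isP B e1 e2 (star (B p p)⁻¹ • p) := isP_smul hB hO _ hp
    have hq0 : star (B p p)⁻¹ • p ≠ 0 :=
      smul_ne_zero' (star_ne_zero.2 (inv_ne_zero (hB.self_ne hp0))) hp0
    have hBpq : B p (star (B p p)⁻¹ • p) = 1 := by
      rw [hB.smulr, star_star, mul_inv_cancel₀ (hB.self_ne hp0)]
    obtain ⟨y, hyW, hy1, hy2⟩ := existsY hB hO hw h0w hx hind (-1) (-1)
    have hy0 : y ≠ 0 := by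
      intro h
      rw [h, hB.zeror] at hy1
      exact neg_ne_zero.2 one_ne_zero hy1.symm
    have h1 := (hT2 p _ w y hp hqP hw hyW h0w hy0).1
      (by rw [hBpq, hy1, add_neg_cancel])
    have h2 := (hT2 p _ x y hp hqP hx hyW h0x hy0).1
      (by rw [hBpq, hy2, add_neg_cancel])
    rw [hy1] at h1
    rw [hy2] at h2
    have h1' : B (A p w hp hw h0w) (A _ y hqP hyW hy0) = 1 := add_neg_eq_zero.1 h1
    have h2' : B (A p x hp hx h0x) (A _ y hqP hyW hy0) = 1 := add_neg_eq_zero.1 h2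
    obtain ⟨c, hc0, hc⟩ := hclaim1 p w x hp hp0 hw h0w hx h0x
    rw [hc, hB.smull, h1', mul_one] at h2'
    rw [hc, h2', one_smul]
  -- full independence of the W-anchor
  have hA3 : ∀ p w hp hw h0,
      A p w hp hw h0 = A p e3 hp i3 n3 := by
    intro p w hp hw h0
    by_cases hp0 : p = 0
    · subst hp0
      rw [hA0 w hp hw h0, hA0 e3 hp i3 n3]
    · by_cases hdep : ∃ δ : K, e3 = δ • w
      · obtain ⟨δ₀, hδ₀⟩ := hdep
        have hδ₀0 : δ₀ ≠ 0 := by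
          intro h
          exact n3 (by rw [hδ₀, h, zero_smul])
        have hind4w : ∀ δ : K, e4 ≠ δ • w := by
          intro δ h
          have hδ0 : δ ≠ 0 := by
            intro hh
            exact n4 (by rw [h, hh, zero_smul])
          have hc : B e3 e4 = δ₀ * (B w w * star δ) := by
            rw [hδ₀, h, hB.smull, hB.smulr]
          rw [hO.o34] at hc
          exact mul_ne_zero hδ₀0
            (mul_ne_zero (hB.self_ne h0) (star_ne_zero.2 hδ0)) hc.symm
        have hind43 : ∀ δ : K, e4 ≠ δ • e3 := by
          intro δ h
          have hδ0 : δ ≠ 0 := by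
            intro hh
            exact n4 (by rw [h, hh, zero_smul])
          have hc : B e3 e4 = B e3 e3 * star δ := by rw [h, hB.smulr]
          rw [hO.o34, hO.n3, one_mul] at hc
          exact star_ne_zero.2 hδ0 hc.symm
        rw [hsub p w e4 hp hp0 hw h0 i4 hind4w n4,
          ← hsub p e3 e4 hp hp0 i3 n3 i4 hind43 n4]
      · push_neg at hdep
        exact hsub p w e3 hp hp0 hw h0 i3 hdep n3
  -- A preserves the form
  have hBU : ∀ p q hp hq,
      B (A p e3 hp i3 n3) (A q e3 hq i3 n3) = B p q := by
    intro p q hp hq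
    set c : K := B p q with hcdef
    set wc : H := (-(star c)) • e3 + e4 with hwcdef
    have hwcW : isW B e1 e2 wc := isW_add hB hO (isW_smul hB hO _ i3) i4
    have hwc1 : B wc e4 = 1 := by
      rw [hwcdef, hB.addl, hB.smull, hO.o34, mul_zero, zero_add, hO.n4]
    have hwc0 : wc ≠ 0 := hB.ne_zero_of_B_ne (by rw [hwc1]; exact one_ne_zero)
    have hBe3wc : B e3 wc = -c := by
      rw [hwcdef, hB.addr, hB.smulr, hO.o34, hO.n3, one_mul, star_neg, star_star,
        add_zero]
    have h := (hT2 p q e3 wc hp hq i3 hwcW n3 hwc0).1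
      (by rw [hBe3wc, ← hcdef, add_neg_cancel])
    rw [hBe3wc] at h
    have h' := add_neg_eq_zero.1 h
    rw [hA3 q wc hq hwcW hwc0] at h'
    exact h'
  -- the map U
  refine ⟨fun p => if hp : isP B e1 e2 p then A p e3 hp i3 n3 else 0, ?_, ?_, ?_, ?_⟩
  · intro p hp
    dsimp only
    rw [dif_pos hp]
    exact hA1 p e3 hp i3 n3
  · intro p q hp hq
    dsimp only
    rw [dif_pos hp, dif_pos hq]
    exact hBU p q hp hq
  · intro p hp w hw h0
    dsimp only
    rw [dif_pos hp, ← hA3 p w hp hw h0]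
    exact hA2 p w hp hw h0
  · intro p hp h0
    dsimp only
    rw [dif_pos hp]
    obtain ⟨t', ht'P, ht'0, him⟩ := imP hB hO hσ hp h0
    obtain ⟨q₀, hq₀P, hq₀0, hpq₀⟩ := rightOrth hB hO hp h0
    have h1 := transfer hB hO hσ h0 (pw_ne hB hO hq₀P i3 n3) ht'0
      (pw_ne hB hO (hA1 q₀ e3 hq₀P i3 n3) i3 n3) him
      (Subtype.ext (hA2 q₀ e3 hq₀P i3 n3))
    have h2 : B p (q₀ + e3) = 0 := by
      rw [hB.addr, hpq₀, PW_zero hB hO hp i3, add_zero]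
    have h3 := h1.1 h2
    rw [hB.addr, PW_zero hB hO ht'P i3, add_zero] at h3
    -- h3 : B t' (A q₀ e3) = 0
    have h4 : B (A p e3 hp i3 n3) (A q₀ e3 hq₀P i3 n3) = 0 := by
      rw [hBU p q₀ hp hq₀P, hpq₀]
    have hUp0 : A p e3 hp i3 n3 ≠ 0 := hAne p e3 hp i3 n3 h0
    have hUq0 : A q₀ e3 hq₀P i3 n3 ≠ 0 := hAne q₀ e3 hq₀P i3 n3 hq₀0
    obtain ⟨c, hc0, hc⟩ := leftUnique hB hO (hA1 q₀ e3 hq₀P i3 n3) hUq0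
      (hA1 p e3 hp i3 n3) hUp0 ht'P ht'0 h4 h3
    rw [him]
    show Submodule.span K {t'} = Submodule.span K {A p e3 hp i3 n3}
    rw [hc, span_smul_eq hc0]

lemma exists_U :
    ∃ U : H → H,
      (∀ p, isP B e1 e2 p → isP B e1 e2 (U p)) ∧
      (∀ p q, isP B e1 e2 p → isP B e1 e2 q → B (U p) (U q) = B p q) ∧
      (∀ p q, isP B e1 e2 p → isP B e1 e2 q → U (p + q) = U p + U q) ∧
      (∀ (c : K) (p), isP B e1 e2 p → U (c • p) = c • U p) ∧
      (∀ p (hp : isP B e1 e2 p) (h0 : p ≠ 0),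
        (σ (lin p h0)).1 = Submodule.span K {U p}) ∧
      (∀ p (hp : isP B e1 e2 p) (w) (hw : isW B e1 e2 w) (h0 : w ≠ 0),
        (σ (lin (p + w) (pw_ne hB hO hp hw h0))).1 = Submodule.span K {U p + w}) := by
  obtain ⟨U, hUP, hBU, hUw, hUlin⟩ := exists_U0 hB hO hσ
  obtain ⟨U', hUP', hBU', hUw', hUlin'⟩ := exists_U0 hB hO (inv_mem hB hO hσ)
  have i3 : isW B e1 e2 e3 := isW_e3 hB hO
  have n3 : e3 ≠ 0 := hO.e3ne hB
  have hUU' : ∀ p, isP B e1 e2 p → U (U' p) = p := by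
    intro p hp
    have h1' : σ⁻¹ (lin (p + e3) (pw_ne hB hO hp i3 n3)) =
        lin (U' p + e3) (pw_ne hB hO (hUP' p hp) i3 n3) :=
      Subtype.ext (hUw' p hp e3 i3 n3)
    have h2 := hUw (U' p) (hUP' p hp) e3 i3 n3
    rw [← h1', ← Equiv.Perm.mul_apply, mul_inv_cancel, Equiv.Perm.one_apply] at h2
    exact (norm_unique hB hO hp (hUP _ (hUP' p hp)) i3 n3 h2).symm
  have surj : ∀ y, isP B e1 e2 y → ∃ r, isP B e1 e2 r ∧ U r = y := by
    intro y hy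
    exact ⟨U' y, hUP' y hy, hUU' y hy⟩
  have hadd : ∀ p q, isP B e1 e2 p → isP B e1 e2 q → U (p + q) = U p + U q := by
    intro p q hp hq
    have hx : isP B e1 e2 (U (p + q) - (U p + U q)) :=
      isP_sub hB hO (hUP _ (isP_add hB hO hp hq))
        (isP_add hB hO (hUP p hp) (hUP q hq))
    have hall : ∀ y, isP B e1 e2 y → B (U (p + q) - (U p + U q)) y = 0 := by
      intro y hy
      obtain ⟨r, hr, hry⟩ := surj y hy
      rw [← hry, hB.subl, hB.addl, hBU _ r (isP_add hB hO hp hq) hr,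
        hBU p r hp hr, hBU q r hq hr, hB.addl, sub_self]
    exact sub_eq_zero.1 (Pnondeg hB hO hx hall)
  have hsmul : ∀ (c : K) (p), isP B e1 e2 p → U (c • p) = c • U p := by
    intro c p hp
    have hx : isP B e1 e2 (U (c • p) - c • U p) :=
      isP_sub hB hO (hUP _ (isP_smul hB hO c hp)) (isP_smul hB hO c (hUP p hp))
    have hall : ∀ y, isP B e1 e2 y → B (U (c • p) - c • U p) y = 0 := by
      intro y hy
      obtain ⟨r, hr, hry⟩ := surj y hy
      rw [← hry, hB.subl, hB.smull, hBU _ r (isP_smul hB hO c hp) hr,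
        hBU p r hp hr, hB.smull, sub_self]
    exact sub_eq_zero.1 (Pnondeg hB hO hx hall)
  exact ⟨U, hUP, hBU, hadd, hsmul, hUlin, hUw⟩

end Sigma

section Transport

variable {K : Type*} [DivisionRing K] [StarRing K]
  {H : Type*} [AddCommGroup H] [Module K H]
  {B : H → H → K} {e1 e2 e3 e4 : H}
  (hB : BForm B) (hO : ONB B e1 e2 e3 e4)
include hB hO

lemma tvec_ne (α : K) : e1 + α • e2 ≠ 0 := by
  intro h
  have h' : (1 : K) • e1 + α • e2 = 0 := by rw [one_smul]; exact h
  exact one_ne_zero (combo_zero hB hO h').1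

lemma Gef_eq {α : K} (hα : α ≠ 0) :
    Gef (prp B) (lin e1 (hO.e1ne hB)) (lin (e1 + α • e2) (tvec_ne hB hO α)) =
      Gef (prp B) (lin e1 (hO.e1ne hB)) (lin e2 (hO.e2ne hB)) := by
  have hconv : ∀ x : XT K H, prp B x (lin e1 (hO.e1ne hB)) →
      (prp B x (lin (e1 + α • e2) (tvec_ne hB hO α)) ↔
        prp B x (lin e2 (hO.e2ne hB))) := by
    intro x hx
    obtain ⟨g, hg, rfl⟩ := X_cases x
    rw [perp_lin hB] at hx
    rw [perp_lin hB, perp_lin hB, hB.addr, hB.smulr, hx, zero_add]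
    constructor
    · intro h
      rcases mul_eq_zero.1 h with h' | h'
      · exact h'
      · exact absurd h' (star_ne_zero.2 hα)
    · intro h
      rw [h, zero_mul]
  ext φ
  simp only [Gef, Set.mem_setOf_eq]
  constructor
  · rintro ⟨h1, h2⟩
    exact ⟨h1, fun x hx1 hx2 => h2 x hx1 ((hconv x hx1).2 hx2)⟩
  · rintro ⟨h1, h2⟩
    exact ⟨h1, fun x hx1 hx2 => h2 x hx1 ((hconv x hx1).1 hx2)⟩

lemma RotSet_eq {α : K} (hα : α ≠ 0) :
    RotSet (prp B) (lin e1 (hO.e1ne hB)) (lin (e1 + α • e2) (tvec_ne hB hO α)) =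
      RotSet (prp B) (lin e1 (hO.e1ne hB)) (lin e2 (hO.e2ne hB)) := by
  unfold RotSet
  rw [Gef_eq hB hO hα]

end Transport

end S11

open S11 in
theorem stmt_11 {K : Type*} [DivisionRing K] [StarRing K]
    {H : Type*} [AddCommGroup H] [Module K H]
    (B : H → H → K)
    (haddl : ∀ u u' v : H, B (u + u') v = B u v + B u' v)
    (haddr : ∀ u v v' : H, B u (v + v') = B u v + B u v')
    (hsmull : ∀ (α : K) (u v : H), B (α • u) v = α * B u v)
    (hsmulr : ∀ (α : K) (u v : H), B u (α • v) = B u v * star α)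
    (hherm : ∀ u v : H, B u v = star (B v u))
    (haniso : ∀ u : H, B u u = 0 → u = 0)
    (hfour : ∃ a b c d : H, a ≠ 0 ∧ b ≠ 0 ∧ c ≠ 0 ∧ d ≠ 0 ∧
      B a b = 0 ∧ B a c = 0 ∧ B a d = 0 ∧ B b c = 0 ∧ B b d = 0 ∧ B c d = 0)
    (hunit : ∀ u : H, u ≠ 0 → ∃ α : K, B (α • u) (α • u) = 1)
    (hdt : DivTrans (X := {S : Submodule K H // ∃ u : H, u ≠ 0 ∧ S = Submodule.span K {u}})
      (fun S T => ∀ u ∈ S.1, ∀ v ∈ T.1, B u v = 0)) :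
    (∀ α : K, star α = α) ∧ (∀ α β : K, α * β = β * α) := by
  classical
  obtain ⟨a, b, c, d, ha, hb, hc, hd, hab, hac, had, hbc, hbd, hcd⟩ := hfour
  have hBf : BForm B := ⟨haddl, haddr, hsmull, hsmulr, hherm, haniso⟩
  obtain ⟨α1, hα1⟩ := hunit a ha
  obtain ⟨α2, hα2⟩ := hunit b hb
  obtain ⟨α3, hα3⟩ := hunit c hc
  obtain ⟨α4, hα4⟩ := hunit d hd
  set e1 : H := α1 • a with he1
  set e2 : H := α2 • b with he2
  set e3 : H := α3 • c with he3
  set e4 : H := α4 • d with he4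
  have hO : ONB B e1 e2 e3 e4 :=
    ⟨hα1, hα2, hα3, hα4,
      by rw [he1, he2, hsmull, hsmulr, hab, zero_mul, mul_zero],
      by rw [he1, he3, hsmull, hsmulr, hac, zero_mul, mul_zero],
      by rw [he1, he4, hsmull, hsmulr, had, zero_mul, mul_zero],
      by rw [he2, he3, hsmull, hsmulr, hbc, zero_mul, mul_zero],
      by rw [he2, he4, hsmull, hsmulr, hbd, zero_mul, mul_zero],
      by rw [he3, he4, hsmull, hsmulr, hcd, zero_mul, mul_zero]⟩
  have i3 : isW B e1 e2 e3 := isW_e3 hBf hO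
  have n3 : e3 ≠ 0 := hO.e3ne hBf
  have hP1 : isP B e1 e2 e1 := isP_e1 hBf hO
  have hP2 : isP B e1 e2 e2 := isP_e2 hBf hO
  have hne_ef : lin (K := K) e1 (hO.e1ne hBf) ≠ lin e2 (hO.e2ne hBf) := by
    intro h
    obtain ⟨c0, hc0, hcc⟩ := (lin_eq_iff _ _).1 h
    have h1 : (1 : K) = 0 := by
      rw [← hO.n1]
      nth_rewrite 1 [hcc]
      rw [hsmull, hO.o21 hBf, mul_zero]
    exact one_ne_zero h1
  have hdt' : DivTrans (prp B) := hdt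
  obtain ⟨⟨_, _, hmulR⟩, ⟨φ, hφR, hφe⟩, _⟩ := hdt' _ _ hne_ef
  obtain ⟨S, hSP, hSB, hSadd, hSsmul, hSlin, hSw⟩ := exists_U hBf hO hφR.1
  -- S e1 = b0 • e2
  have hSe1ne : S e1 ≠ 0 :=
    hBf.ne_zero_of_B_ne (by rw [hSB e1 e1 hP1 hP1, hO.n1]; exact one_ne_zero)
  have hspanS : Submodule.span K {S e1} = Submodule.span K {e2} := by
    have h1 := hSlin e1 hP1 (hO.e1ne hBf)
    rw [hφe] at h1
    exact h1.symm
  obtain ⟨b0, hb0⟩ := Submodule.mem_span_singleton.1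
    (show S e1 ∈ Submodule.span K {e2} by
      rw [← hspanS]; exact Submodule.mem_span_singleton_self _)
  -- hb0 : b0 • e2 = S e1
  have hb0ne : b0 ≠ 0 := by
    intro h
    rw [h, zero_smul] at hb0
    exact hSe1ne hb0.symm
  -- S e2 = c0 • e1
  have hSe2ne : S e2 ≠ 0 :=
    hBf.ne_zero_of_B_ne (by rw [hSB e2 e2 hP2 hP2, hO.n2]; exact one_ne_zero)
  set c0 : K := B (S e2) e1 with hc0def
  set d0 : K := B (S e2) e2 with hd0def
  have hSe2rep : S e2 = c0 • e1 + d0 • e2 := hSP e2 hP2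
  have hd00 : d0 = 0 := by
    have h1 : B (S e1) (S e2) = 0 := by rw [hSB e1 e2 hP1 hP2, hO.o12]
    rw [← hb0, hSe2rep, hsmull, Be2P hBf hO c0 d0] at h1
    rcases mul_eq_zero.1 h1 with h | h
    · exact absurd h hb0ne
    · exact star_eq_zero.1 h
  have hSe2c : S e2 = c0 • e1 := by rw [hSe2rep, hd00, zero_smul, add_zero]
  have hc0ne : c0 ≠ 0 := by
    intro h
    rw [h, zero_smul] at hSe2c
    exact hSe2ne hSe2c
  -- the key scalar identity
  have key : ∀ α : K, α ≠ 0 → star α = -(b0⁻¹ * (α * c0)) := by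
    intro α hα
    have htne : e1 + α • e2 ≠ 0 := tvec_ne hBf hO α
    have hne2 : lin (K := K) e1 (hO.e1ne hBf) ≠ lin (e1 + α • e2) htne := by
      intro h
      obtain ⟨c1, hc1, hcc⟩ := (lin_eq_iff _ _).1 h
      have hcc' : e1 = c1 • e1 + (c1 * α) • e2 := by
        conv_lhs => rw [hcc]
        rw [smul_add]
        simp only [smul_smul]
      have h2 : (0 : K) = c1 * α := by
        rw [← hO.o12]
        nth_rewrite 1 [hcc']
        rw [coord2 hBf hO]
      exact hα (by
        rcases mul_eq_zero.1 h2.symm with h' | h'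
        · exact absurd h' hc1
        · exact h')
    obtain ⟨_, ⟨φα, hφαR, hφαe⟩, _⟩ := hdt' _ _ hne2
    have hφαR' : φα ∈ RotSet (prp B) (lin e1 (hO.e1ne hBf)) (lin e2 (hO.e2ne hBf)) := by
      rw [← RotSet_eq hBf hO hα]
      exact hφαR
    obtain ⟨T, hTP, hTB, hTadd, hTsmul, hTlin, hTw⟩ := exists_U hBf hO hφαR'.1
    -- T e1 = s • (e1 + α • e2)
    have hTe1ne : T e1 ≠ 0 :=
      hBf.ne_zero_of_B_ne (by rw [hTB e1 e1 hP1 hP1, hO.n1]; exact one_ne_zero)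
    have hspanT : Submodule.span K {T e1} = Submodule.span K {e1 + α • e2} := by
      have h1 := hTlin e1 hP1 (hO.e1ne hBf)
      rw [hφαe] at h1
      exact h1.symm
    obtain ⟨s, hs⟩ := Submodule.mem_span_singleton.1
      (show T e1 ∈ Submodule.span K {e1 + α • e2} by
        rw [← hspanT]; exact Submodule.mem_span_singleton_self _)
    have hTe1 : T e1 = s • (e1 + α • e2) := hs.symm
    have hs0 : s ≠ 0 := by
      intro h
      rw [h, zero_smul] at hTe1
      exact hTe1ne hTe1
    -- coordinates of T e2
    set x0 : K := B (T e2) e1 with hx0def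
    set y0 : K := B (T e2) e2 with hy0def
    have hTe2rep : T e2 = x0 • e1 + y0 • e2 := hTP e2 hP2
    -- unitarity constraint
    have hBT : B (T e1) (T e2) = 0 := by rw [hTB e1 e2 hP1 hP2, hO.o12]
    rw [hTe1, hTe2rep, hsmull] at hBT
    have hin : B (e1 + α • e2) (x0 • e1 + y0 • e2) = star x0 + α * star y0 := by
      have h1 := BPP hBf hO 1 α x0 y0
      rwa [one_smul, one_mul] at h1
    rw [hin] at hBT
    have hsum : star x0 + α * star y0 = 0 := by
      rcases mul_eq_zero.1 hBT with h | h
      · exact absurd h hs0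
      · exact h
    have hxy : x0 = -(y0 * star α) := by
      have h1 : star x0 = -(α * star y0) := eq_neg_of_add_eq_zero_left hsum
      have h2 := congrArg star h1
      rwa [star_star, star_neg, star_mul, star_star] at h2
    -- commutation of S and T at e1
    have hcomm := (hmulR φ hφR φα hφαR').2
    have hST : S (T e1) = T (S e1) := by
      have hTline : φα (lin (e1 + e3) (pw_ne hBf hO hP1 i3 n3)) =
          lin (T e1 + e3) (pw_ne hBf hO (hTP e1 hP1) i3 n3) :=
        Subtype.ext (hTw e1 hP1 e3 i3 n3)
      have hSline : φ (lin (e1 + e3) (pw_ne hBf hO hP1 i3 n3)) =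
          lin (S e1 + e3) (pw_ne hBf hO (hSP e1 hP1) i3 n3) :=
        Subtype.ext (hSw e1 hP1 e3 i3 n3)
      have h1 : ((φ * φα) (lin (e1 + e3) (pw_ne hBf hO hP1 i3 n3))).1 =
          Submodule.span K {S (T e1) + e3} := by
        rw [Equiv.Perm.mul_apply, hTline]
        exact hSw (T e1) (hTP e1 hP1) e3 i3 n3
      have h2 : ((φα * φ) (lin (e1 + e3) (pw_ne hBf hO hP1 i3 n3))).1 =
          Submodule.span K {T (S e1) + e3} := by
        rw [Equiv.Perm.mul_apply, hSline]
        exact hTw (S e1) (hSP e1 hP1) e3 i3 n3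
      rw [hcomm] at h1
      exact norm_unique hBf hO (hSP _ (hTP e1 hP1)) (hTP _ (hSP e1 hP1)) i3 n3
        (h1.symm.trans h2)
    -- compute both sides
    have hL : S (T e1) = (s * α * c0) • e1 + (s * b0) • e2 := by
      rw [hTe1, hSsmul s _ (isP_add hBf hO hP1 (isP_smul hBf hO α hP2)),
        hSadd e1 (α • e2) hP1 (isP_smul hBf hO α hP2), hSsmul α e2 hP2,
        ← hb0, hSe2c, smul_add]
      simp only [smul_smul]
      rw [mul_assoc]
      abel
    have hR : T (S e1) = (b0 * x0) • e1 + (b0 * y0) • e2 := by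
      rw [← hb0, hTsmul b0 e2 hP2, hTe2rep, smul_add]
      simp only [smul_smul]
    have h5 : (s * α * c0) • e1 + (s * b0) • e2 = (b0 * x0) • e1 + (b0 * y0) • e2 := by
      rw [← hL, ← hR, hST]
    have hco1 : s * α * c0 = b0 * x0 := by
      have h6 := congrArg (fun z => B z e1) h5
      simpa only [coord1 hBf hO] using h6
    have hco2 : s * b0 = b0 * y0 := by
      have h6 := congrArg (fun z => B z e2) h5
      simpa only [coord2 hBf hO] using h6
    -- solve for star α
    have h6 : s * (α * c0) = s * -(b0 * star α) := by
      rw [← mul_assoc, hco1, hxy, mul_neg, mul_neg, ← mul_assoc, ← hco2, mul_assoc]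
    have h7 := mul_left_cancel₀ hs0 h6
    have h8 : b0 * star α = -(α * c0) := by rw [h7, neg_neg]
    rw [← mul_neg, ← h8, ← mul_assoc, inv_mul_cancel₀ hb0ne, one_mul]
  -- conclude: c0 = -b0, star is conjugation by b0
  have h1 := key 1 one_ne_zero
  rw [star_one, one_mul] at h1
  have hb0c0 : b0 = -c0 := by
    have h2 : b0 * (1 : K) = b0 * -(b0⁻¹ * c0) := by rw [← h1]
    rwa [mul_one, mul_neg, ← mul_assoc, mul_inv_cancel₀ hb0ne, one_mul] at h2
  have hc0b0 : c0 = -b0 := by rw [hb0c0, neg_neg]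
  have hstar : ∀ α : K, star α = b0⁻¹ * α * b0 := by
    intro α
    by_cases hα : α = 0
    · rw [hα, star_zero, mul_zero, zero_mul]
    · have h3 := key α hα
      rw [hc0b0] at h3
      rw [h3, mul_neg, mul_neg, neg_neg, ← mul_assoc]
  have hcm : ∀ α β : K, α * β = β * α := by
    intro α β
    have h1' : star (α * β) = star β * star α := star_mul α β
    rw [hstar, hstar, hstar] at h1'
    have h2 : b0⁻¹ * β * b0 * (b0⁻¹ * α * b0) = b0⁻¹ * (β * α) * b0 := by
      have h3 : b0 * (b0⁻¹ * α * b0) = α * b0 := by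
        rw [← mul_assoc, ← mul_assoc, mul_inv_cancel₀ hb0ne, one_mul]
      calc b0⁻¹ * β * b0 * (b0⁻¹ * α * b0)
          = b0⁻¹ * β * (b0 * (b0⁻¹ * α * b0)) := by rw [mul_assoc (b0⁻¹ * β)]
        _ = b0⁻¹ * β * (α * b0) := by rw [h3]
        _ = b0⁻¹ * (β * α) * b0 := by rw [mul_assoc, mul_assoc, mul_assoc]
    rw [h2] at h1'
    have h3 := mul_right_cancel₀ hb0ne h1'
    exact mul_left_cancel₀ (inv_ne_zero hb0ne) h3
  refine ⟨fun α => ?_, hcm⟩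
  rw [hstar, hcm b0⁻¹ α, mul_assoc, inv_mul_cancel₀ hb0ne, mul_one]
end

section
/- Let (X,⊥) be a homogeneously transitive orthoset and let e₁,…,e_k and f₁,…,f_k be two k-tuples of elements of X, each consisting of mutually orthogonal elements. Then there is an automorphism φ of (X,⊥) such that φ(eᵢ) = fᵢ for i = 1,…,k and φ(x) = x for every x ∈ X orthogonal to all of e₁,…,e_k, f₁,…,f_k. -/
/-!
Induction on `k`: by (HT1) some element of `G_{e₁f₁}` moves `e₁` to `f₁`; it preserves
orthogonality, so the images of `e₂, …, e_k` stay orthogonal to each other and to `f₁`, and an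
automorphism for the shorter tuples then fixes `f₁`. The composite does the job.
-/

section

variable {X : Type*} {perp : X → X → Prop}

theorem IsOrthoAuto.mul {φ ψ : Equiv.Perm X} (hφ : IsOrthoAuto perp φ)
    (hψ : IsOrthoAuto perp ψ) : IsOrthoAuto perp (φ * ψ) :=
  fun p q => (hψ p q).trans (hφ (ψ p) (ψ q))

theorem HomTrans.exists_mem_Gef (hht : HomTrans perp) (e f : X) :
    ∃ φ ∈ Gef perp e f, φ e = f := by
  by_cases h : e = f
  · exact ⟨1, ⟨fun _ _ => Iff.rfl, fun _ _ _ => rfl⟩, h⟩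
  · exact (hht e f h).1

def IsOrthoTransfer {ι : Type*} (perp : X → X → Prop) (e f : ι → X) (φ : Equiv.Perm X) :
    Prop :=
  IsOrthoAuto perp φ ∧ (∀ i, φ (e i) = f i) ∧
    ∀ x, (∀ i, perp x (e i)) → (∀ i, perp x (f i)) → φ x = x

theorem isOrthoTransfer_one_of_isEmpty {ι : Type*} [IsEmpty ι] (e f : ι → X) :
    IsOrthoTransfer perp e f 1 :=
  ⟨fun _ _ => Iff.rfl, isEmptyElim, fun _ _ _ => rfl⟩

theorem IsOrthoTransfer.cons {n : ℕ} {e f : Fin (n + 1) → X} {φ₁ φ₂ : Equiv.Perm X}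
    (hφ₂ : IsOrthoTransfer perp (fun i : Fin n => φ₁ (e i.succ)) (fun i => f i.succ) φ₂)
    (hφ₁ : φ₁ ∈ Gef perp (e 0) (f 0)) (hφ₁e : φ₁ (e 0) = f 0)
    (he : ∀ i : Fin n, perp (e 0) (e i.succ)) (hf : ∀ i : Fin n, perp (f 0) (f i.succ)) :
    IsOrthoTransfer perp e f (φ₂ * φ₁) := by
  obtain ⟨hφ₁auto, hφ₁fix⟩ := hφ₁
  obtain ⟨hφ₂auto, hφ₂e, hφ₂fix⟩ := hφ₂
  have hf₀e : ∀ i : Fin n, perp (f 0) (φ₁ (e i.succ)) := fun i => by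
    simpa only [hφ₁e] using (hφ₁auto _ _).1 (he i)
  have hφe₀ : φ₂ (φ₁ (e 0)) = f 0 := by rw [hφ₁e, hφ₂fix (f 0) hf₀e hf]
  refine ⟨hφ₂auto.mul hφ₁auto, Fin.cases hφe₀ hφ₂e, fun x hxe hxf => ?_⟩
  have hx : φ₁ x = x := hφ₁fix x (hxe 0) (hxf 0)
  have hxe' : ∀ i : Fin n, perp x (φ₁ (e i.succ)) := fun i => by
    simpa only [hx] using (hφ₁auto _ _).1 (hxe i.succ)
  change φ₂ (φ₁ x) = x
  rw [hx, hφ₂fix x hxe' fun i => hxf i.succ]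

end

theorem stmt_12_general {X : Type*} (perp : X → X → Prop)
    (hht : HomTrans perp)
    (k : ℕ) (e f : Fin k → X)
    (he : ∀ i j : Fin k, i ≠ j → perp (e i) (e j))
    (hf : ∀ i j : Fin k, i ≠ j → perp (f i) (f j)) :
    ∃ φ : Equiv.Perm X, IsOrthoAuto perp φ ∧
      (∀ i : Fin k, φ (e i) = f i) ∧
      (∀ x : X, (∀ i : Fin k, perp x (e i)) → (∀ i : Fin k, perp x (f i)) →
        φ x = x) := by
  induction k with
  | zero => exact ⟨1, isOrthoTransfer_one_of_isEmpty e f⟩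
  | succ n ih =>
    obtain ⟨φ₁, hφ₁, hφ₁e⟩ := hht.exists_mem_Gef (e 0) (f 0)
    obtain ⟨φ₂, hφ₂⟩ := ih (fun i => φ₁ (e i.succ)) (fun i => f i.succ)
      (fun i j hij => (hφ₁.1 _ _).1 (he _ _ ((Fin.succ_injective n).ne hij)))
      (fun i j hij => hf _ _ ((Fin.succ_injective n).ne hij))
    exact ⟨φ₂ * φ₁, IsOrthoTransfer.cons hφ₂ hφ₁ hφ₁e
      (fun i => he 0 i.succ (Fin.succ_ne_zero i).symm)
      (fun i => hf 0 i.succ (Fin.succ_ne_zero i).symm)⟩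

theorem stmt_12 {X : Type*} [Nonempty X] (perp : X → X → Prop)
    (hsymm : ∀ x y : X, perp x y → perp y x)
    (hirr : ∀ x : X, ¬ perp x x)
    (hht : HomTrans perp)
    (k : ℕ) (e f : Fin k → X)
    (he : ∀ i j : Fin k, i ≠ j → perp (e i) (e j))
    (hf : ∀ i j : Fin k, i ≠ j → perp (f i) (f j)) :
    ∃ φ : Equiv.Perm X, IsOrthoAuto perp φ ∧
      (∀ i : Fin k, φ (e i) = f i) ∧
      (∀ x : X, (∀ i : Fin k, perp x (e i)) → (∀ i : Fin k, perp x (f i)) →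
        φ x = x) :=
  stmt_12_general perp hht k e f he hf
end

section
/- Let (X,⊥) be an orthoset containing four mutually orthogonal elements. Then (X,⊥) is homogeneously transitive and ⊥ does not coincide with ≠ if and only if for all distinct e, f ∈ X: (HT1') there are φ, ψ ∈ G_{ef} such that φ(e) = f and ψ(e) ∉ {e, f}; and (HT2') there is ē ∈ X with ē ⊥ e and G_{eē} = G_{ef}. -/
lemma auto_mul {X : Type*} {perp : X → X → Prop} {φ ψ : Equiv.Perm X}
    (hφ : IsOrthoAuto perp φ) (hψ : IsOrthoAuto perp ψ) : IsOrthoAuto perp (φ * ψ) :=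
  fun p q => (hψ p q).trans (hφ _ _)

lemma auto_inv {X : Type*} {perp : X → X → Prop} {τ : Equiv.Perm X}
    (h : IsOrthoAuto perp τ) : IsOrthoAuto perp τ⁻¹ := by
  intro p q
  have := h (τ⁻¹ p) (τ⁻¹ q)
  simpa using this.symm

lemma Gef_conj {X : Type*} {perp : X → X → Prop} {τ : Equiv.Perm X}
    (hτ : IsOrthoAuto perp τ) (e f : X) :
    Gef perp e f = (fun φ => τ⁻¹ * φ * τ) '' Gef perp (τ e) (τ f) := by
  ext ψ
  constructor
  · rintro ⟨hψa, hψfix⟩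
    refine ⟨τ * ψ * τ⁻¹, ⟨auto_mul (auto_mul hτ hψa) (auto_inv hτ), ?_⟩, by group⟩
    intro x hxe hxf
    have h1 : perp (τ⁻¹ x) e := by
      have := auto_inv hτ x (τ e); simpa using this.mp hxe
    have h2 : perp (τ⁻¹ x) f := by
      have := auto_inv hτ x (τ f); simpa using this.mp hxf
    rw [Equiv.Perm.mul_apply, Equiv.Perm.mul_apply, hψfix _ h1 h2]; simp
  · rintro ⟨φ, ⟨hφa, hφfix⟩, rfl⟩
    refine ⟨auto_mul (auto_mul (auto_inv hτ) hφa) hτ, ?_⟩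
    intro x hxe hxf
    have h1 : perp (τ x) (τ e) := (hτ x e).mp hxe
    have h2 : perp (τ x) (τ f) := (hτ x f).mp hxf
    simp [Equiv.Perm.mul_apply, hφfix _ h1 h2]

theorem stmt_16 {X : Type*} [Nonempty X] (perp : X → X → Prop)
    (hsymm : ∀ x y : X, perp x y → perp y x)
    (hirr : ∀ x : X, ¬ perp x x)
    (hrank : ∃ a b c d : X,
      perp a b ∧ perp a c ∧ perp a d ∧ perp b c ∧ perp b d ∧ perp c d) :
    (HomTrans perp ∧ ¬ ∀ x y : X, perp x y ↔ x ≠ y) ↔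
    (∀ e f : X, e ≠ f →
      ((∃ φ ∈ Gef perp e f, φ e = f) ∧
        (∃ ψ ∈ Gef perp e f, ψ e ≠ e ∧ ψ e ≠ f)) ∧
      (∃ ebar : X, perp ebar e ∧ Gef perp e ebar = Gef perp e f)) := by
  obtain ⟨a, b, c, d, hab, hac, had, hbc, hbd, hcd⟩ := hrank
  have hne : ∀ {x y : X}, perp x y → x ≠ y := by
    intro x y h hxy
    exact hirr y (hxy ▸ h)
  constructor
  · rintro ⟨hHT, hnotall⟩
    obtain ⟨p, q, hpq1, hpq2⟩ : ∃ p q : X, p ≠ q ∧ ¬ perp p q := by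
      by_contra h
      push_neg at h
      exact hnotall fun x y => ⟨hne, fun hxy => h x y hxy⟩
    intro e f hef
    refine ⟨⟨(hHT e f hef).1, ?_⟩, ?_⟩
    · -- ψ with ψ e ∉ {e, f}
      obtain ⟨g, h, hgh, hstat⟩ : ∃ g h : X, g ≠ h ∧ (perp g h ↔ ¬ perp e f) := by
        by_cases hef' : perp e f
        · exact ⟨p, q, hpq1, by simp [hpq2, hef']⟩
        · exact ⟨a, b, hne hab, by simp [hab, hef']⟩
      obtain ⟨τ, hτa, hτe, hG⟩ := (hHT e f hef).2 g h hgh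
      obtain ⟨φ, hφ, hφg⟩ := (hHT g h hgh).1
      have hmem : τ⁻¹ * φ * τ ∈ Gef perp e f := by
        rw [hG]; exact ⟨φ, hφ, rfl⟩
      have happ : (τ⁻¹ * φ * τ) e = τ⁻¹ h := by
        simp [Equiv.Perm.mul_apply, hτe, hφg]
      refine ⟨τ⁻¹ * φ * τ, hmem, ?_, ?_⟩
      · rw [happ]
        intro hc
        apply hgh
        have : h = τ e := by rw [← hc]; simp
        rw [this, hτe]
      · rw [happ]
        intro hc
        have hhτf : h = τ f := by rw [← hc]; simp
        have : perp e f ↔ perp g h := by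
          rw [hhτf, ← hτe]; exact hτa e f
        tauto
    · -- ebar
      obtain ⟨τ, hτa, hτe, hG⟩ := (hHT e f hef).2 a b (hne hab)
      have hτia : τ⁻¹ a = e := by rw [← hτe]; simp
      refine ⟨τ⁻¹ b, ?_, ?_⟩
      · have := (auto_inv hτa) b a
        rw [hτia] at this
        exact this.mp (hsymm a b hab)
      · have key := Gef_conj hτa (τ⁻¹ a) (τ⁻¹ b)
        simp only [← Equiv.Perm.mul_apply, mul_inv_cancel, Equiv.Perm.one_apply] at key
        rw [hτia] at key
        rw [key, ← hG]
  · intro hR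
    constructor
    · intro e f hef
      refine ⟨(hR e f hef).1.1, ?_⟩
      intro e' f' hef'
      obtain ⟨eb, hebe, hGe⟩ := (hR e f hef).2
      obtain ⟨eb', heb'e, hGe'⟩ := (hR e' f' hef').2
      obtain ⟨σ, hσa, hσe⟩ : ∃ σ : Equiv.Perm X, IsOrthoAuto perp σ ∧ σ e = e' := by
        by_cases hee' : e = e'
        · exact ⟨1, fun p q => Iff.rfl, by simp [hee']⟩
        · obtain ⟨φ, hφ, hφe⟩ := (hR e e' hee').1.1
          exact ⟨φ, hφ.1, hφe⟩
      have hhe' : perp (σ eb) e' := by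
        have := hσa eb e
        rw [hσe] at this
        exact this.mp hebe
      obtain ⟨ρ, hρa, hρe', hρh⟩ :
          ∃ ρ : Equiv.Perm X, IsOrthoAuto perp ρ ∧ ρ e' = e' ∧ ρ (σ eb) = eb' := by
        by_cases hhe : σ eb = eb'
        · exact ⟨1, fun p q => Iff.rfl, by simp, by simp [hhe]⟩
        · obtain ⟨φ, ⟨hφa, hφfix⟩, hφh⟩ := (hR (σ eb) eb' hhe).1.1
          exact ⟨φ, hφa, hφfix e' (hsymm _ _ hhe') (hsymm _ _ heb'e), hφh⟩
      set τ := ρ * σ with hτdef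
      have hτa : IsOrthoAuto perp τ := auto_mul hρa hσa
      have hτe : τ e = e' := by simp [hτdef, Equiv.Perm.mul_apply, hσe, hρe']
      have hτeb : τ eb = eb' := by simp [hτdef, Equiv.Perm.mul_apply, hρh]
      refine ⟨τ, hτa, hτe, ?_⟩
      have key := Gef_conj hτa e eb
      rw [hτe, hτeb] at key
      rw [← hGe, key, hGe']
    · intro hall
      obtain ⟨ψ, ⟨hψa, hψfix⟩, hψe, hψf⟩ := (hR a b (hne hab)).1.2
      have h1 : ψ (ψ a) = ψ a :=
        hψfix (ψ a) ((hall _ _).mpr hψe) ((hall _ _).mpr hψf)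
      exact hψe (ψ.injective h1)
end
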